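/- arXiv:2306.15744 — 7 statements merged into one kernel-verified Lean document; each statement's English description precedes it below -/
import Mathlib

section
/- For every pair of integers r ≥ 1 and t ≥ 1 there exists an [A_r(t), A_r(A_r(t))]-size-indexing Sperner family with alphabet size 2r; that is, a family of multisets (Q_m) indexed by m ∈ {A_r(t), A_r(t)+1, …, A_r(A_r(t))}, each Q_m having exactly m elements all drawn from {1, …, 2r}, such that no Q_m is a sub-multiset of any other Q_{m'} with m ≠ m'. -/
/-- The Ackermann-like hierarchy from the paper: `A r 1 = 2` for all `r ≥ 1`,
`A 1 t = 2 * t` for `t ≥ 2`, and `A (r+1) t = A r (A (r+1) (t-1))` for `t ≥ 2`.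
(The values at `t = 0` and `r = 0` are junk values, never used for `r, t ≥ 1`.) -/
def A : ℕ → ℕ → ℕ
  | _, 0 => 0
  | _, 1 => 2
  | 0, t + 2 => 2 * (t + 2)
  | 1, t + 2 => 2 * (t + 2)
  | r + 2, t + 2 => A (r + 1) (A (r + 2) (t + 1))

/-!
For `r = 1`, on sizes `2t ≤ m ≤ 4t` take `2(m - 2t)` ones and `4t - m` twos: the number of twos
strictly decreases as `m` grows.

For the step `r → r + 1` put `f = A r` and `T = A (r + 1) t`, so that `A (r + 1) T = f^[T] 1`.
The sizes from `T` to `f^[T] 1` are covered by consecutive blocks `j = 0, …, T - 2`: block `j`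
is the family for `r` on `[f^[j+1] 1, f^[j+2] 1]`, each member padded with `T - 2 - j`
copies of the new letter `2r + 1` (and trimmed at the bottom where it overlaps the previous
block). The padding strictly decreases from block to block, which separates the blocks, while
inside a block it is common to all members.
-/

open Finset

lemma A_one (r : ℕ) : A r 1 = 2 := by
  rcases r with _ | _ | r <;> simp [A]

lemma A_one_left (t : ℕ) : A 1 t = 2 * t := by
  rcases t with _ | _ | t <;> simp [A]

lemma A_succ_succ {r t : ℕ} (hr : 1 ≤ r) (ht : 1 ≤ t) :
    A (r + 1) (t + 1) = A r (A (r + 1) t) := by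
  obtain ⟨r, rfl⟩ := Nat.exists_eq_add_of_le' hr
  obtain ⟨t, rfl⟩ := Nat.exists_eq_add_of_le' ht
  rw [A]

lemma A_succ_eq_iterate {r u : ℕ} (hr : 1 ≤ r) (hu : 1 ≤ u) : A (r + 1) u = (A r)^[u] 1 := by
  induction u, hu using Nat.le_induction with
  | base => simp [A_one]
  | succ u hu ih => rw [A_succ_succ hr hu, ih, Function.iterate_succ_apply']

lemma two_mul_le_A {r t : ℕ} (hr : 1 ≤ r) (ht : 1 ≤ t) : 2 * t ≤ A r t := by
  induction r, hr using Nat.le_induction generalizing t with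
  | base => rw [A_one_left]
  | succ r hr ih =>
    induction t, ht using Nat.le_induction with
    | base => rw [A_one]
    | succ t ht _ =>
      have := ih (t := A (r + 1) t) (by omega)
      rw [A_succ_succ hr ht]
      omega

def IsSizeIndexingSperner (n lo hi : ℕ) (Q : ℕ → Multiset ℕ) : Prop :=
  (∀ m ∈ Icc lo hi, (Q m).card = m ∧ ∀ x ∈ Q m, x ∈ Icc 1 n) ∧
  ∀ m ∈ Icc lo hi, ∀ m' ∈ Icc lo hi, m ≠ m' → ¬ Q m ≤ Q m'

namespace IsSizeIndexingSperner

variable {n lo hi : ℕ} {Q : ℕ → Multiset ℕ}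

lemma of_lt (hcard : ∀ m ∈ Icc lo hi, (Q m).card = m ∧ ∀ x ∈ Q m, x ∈ Icc 1 n)
    (hlt : ∀ m ∈ Icc lo hi, ∀ m' ∈ Icc lo hi, m < m' → ¬ Q m ≤ Q m') :
    IsSizeIndexingSperner n lo hi Q := by
  refine ⟨hcard, fun m hm m' hm' hne hle => ?_⟩
  rcases hne.lt_or_gt with hlt' | hgt
  · exact hlt m hm m' hm' hlt' hle
  · have := Multiset.card_le_card hle
    rw [(hcard m hm).1, (hcard m' hm').1] at this
    omega

lemma mono (h : IsSizeIndexingSperner n lo hi Q) {n' lo' hi' : ℕ} (hn : n ≤ n')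
    (hlo : lo ≤ lo') (hhi : hi' ≤ hi) : IsSizeIndexingSperner n' lo' hi' Q := by
  have sub : Icc lo' hi' ⊆ Icc lo hi := Icc_subset_Icc hlo hhi
  refine ⟨fun m hm => ⟨(h.1 m (sub hm)).1, fun x hx => ?_⟩,
    fun m hm m' hm' => h.2 m (sub hm) m' (sub hm')⟩
  have := mem_Icc.1 ((h.1 m (sub hm)).2 x hx)
  exact mem_Icc.2 ⟨this.1, this.2.trans hn⟩

lemma count_eq_zero (h : IsSizeIndexingSperner n lo hi Q) {m : ℕ} (hm : m ∈ Icc lo hi)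
    {x : ℕ} (hx : n < x) : (Q m).count x = 0 :=
  Multiset.count_eq_zero.2 fun hmem => by
    have := mem_Icc.1 ((h.1 m hm).2 x hmem)
    omega

lemma pad (h : IsSizeIndexingSperner n lo hi Q) (c : ℕ) :
    IsSizeIndexingSperner (n + 1) (lo + c) (hi + c)
      (fun m => Q (m - c) + Multiset.replicate c (n + 1)) := by
  have shift : ∀ m ∈ Icc (lo + c) (hi + c), m - c ∈ Icc lo hi := fun m hm => by
    simp only [mem_Icc] at hm ⊢; omega
  refine ⟨fun m hm => ⟨?_, fun x hx => ?_⟩, fun m hm m' hm' hne hle => ?_⟩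
  · have := mem_Icc.1 hm
    simp only [Multiset.card_add, Multiset.card_replicate, (h.1 _ (shift m hm)).1]
    omega
  · rcases Multiset.mem_add.1 hx with hx | hx
    · have := mem_Icc.1 ((h.1 _ (shift m hm)).2 x hx)
      exact mem_Icc.2 ⟨this.1, by omega⟩
    · rw [Multiset.eq_of_mem_replicate hx]
      exact mem_Icc.2 ⟨by omega, le_rfl⟩
  · have := mem_Icc.1 hm; have := mem_Icc.1 hm'
    exact h.2 _ (shift m hm) _ (shift m' hm') (by omega) ((add_le_add_iff_right _).1 hle)

lemma count_pad (h : IsSizeIndexingSperner n lo hi Q) {c m : ℕ} (hm : m - c ∈ Icc lo hi) :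
    (Q (m - c) + Multiset.replicate c (n + 1)).count (n + 1) = c := by
  rw [Multiset.count_add, h.count_eq_zero hm (Nat.lt_succ_self n), Multiset.count_replicate_self,
    zero_add]

lemma piecewise {mid : ℕ} {P : ℕ → Multiset ℕ} (hP : IsSizeIndexingSperner n lo mid P)
    (hQ : IsSizeIndexingSperner n (mid + 1) hi Q)
    (hsep : ∀ m ∈ Icc lo mid, ∀ m' ∈ Icc (mid + 1) hi, ¬ P m ≤ Q m') :
    IsSizeIndexingSperner n lo hi (fun m => if m ≤ mid then P m else Q m) := by
  have low : ∀ m ∈ Icc lo hi, m ≤ mid → m ∈ Icc lo mid := fun m hm h => by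
    simp only [mem_Icc] at hm ⊢; omega
  have high : ∀ m ∈ Icc lo hi, ¬ m ≤ mid → m ∈ Icc (mid + 1) hi := fun m hm h => by
    simp only [mem_Icc] at hm ⊢; omega
  refine of_lt (fun m hm => ?_) (fun m hm m' hm' hlt => ?_)
  · by_cases h : m ≤ mid
    · simpa only [if_pos h] using hP.1 m (low m hm h)
    · simpa only [if_neg h] using hQ.1 m (high m hm h)
  · by_cases h : m ≤ mid <;> by_cases h' : m' ≤ mid
    · rw [if_pos h, if_pos h']
      exact hP.2 m (low m hm h) m' (low m' hm' h') hlt.ne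
    · rw [if_pos h, if_neg h']
      exact hsep m (low m hm h) m' (high m' hm' h')
    · omega
    · rw [if_neg h, if_neg h']
      exact hQ.2 m (high m hm h) m' (high m' hm' h') hlt.ne

end IsSizeIndexingSperner

open IsSizeIndexingSperner

lemma isSizeIndexingSperner_two (n : ℕ) :
    IsSizeIndexingSperner 2 n (2 * n)
      (fun m => Multiset.replicate (2 * (m - n)) 1 + Multiset.replicate (2 * n - m) 2) := by
  refine of_lt (fun m hm => ⟨?_, fun x hx => ?_⟩) (fun m _ m' hm' hlt hle => ?_)
  · have := mem_Icc.1 hm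
    simp only [Multiset.card_add, Multiset.card_replicate]
    omega
  · rcases Multiset.mem_add.1 hx with hx | hx <;> rw [Multiset.eq_of_mem_replicate hx] <;> decide
  · have htwos := Multiset.le_iff_count.1 hle 2
    have := mem_Icc.1 hm'
    simp only [Multiset.count_add, Multiset.count_replicate_self,
      Multiset.count_replicate, if_neg (show (1 : ℕ) ≠ 2 by decide)] at htwos
    omega

lemma exists_isSizeIndexingSperner_iterate {k : ℕ} {f : ℕ → ℕ} (hf : ∀ s, 1 ≤ s → 1 ≤ f s)
    (hW : ∀ s, 1 ≤ s → ∃ W, IsSizeIndexingSperner k (f s) (f (f s)) W) (b : ℕ) {s : ℕ}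
    (hs : 1 ≤ s) : ∃ Q, IsSizeIndexingSperner (k + 1) (f s + b) (f^[b + 2] s) Q ∧
      ∀ m ∈ Icc (f s + b) (f^[b + 2] s), (Q m).count (k + 1) ≤ b := by
  induction b generalizing s with
  | zero =>
    obtain ⟨W, hW⟩ := hW s hs
    exact ⟨W, hW.mono (by omega) le_rfl le_rfl,
      fun m hm => (hW.count_eq_zero hm (Nat.lt_succ_self k)).le⟩
  | succ b ih =>
    obtain ⟨W, hW⟩ := hW s hs
    obtain ⟨Q, hQ, hQcount⟩ := ih (hf s hs)
    have hQ' := hQ.mono le_rfl (show f (f s) + b ≤ f (f s) + (b + 1) + 1 by omega) le_rfl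
    refine ⟨_, (hW.pad (b + 1)).piecewise hQ' fun m hm m' hm' hle => ?_, fun m hm => ?_⟩
    · have hpad := Multiset.le_iff_count.1 hle (k + 1)
      rw [hW.count_pad (by simp only [mem_Icc] at hm ⊢; omega)] at hpad
      have := hQcount m' (mem_Icc.2 ⟨by have := mem_Icc.1 hm'; omega, (mem_Icc.1 hm').2⟩)
      omega
    · split_ifs with hlow
      · rw [hW.count_pad (by simp only [mem_Icc] at hm ⊢; omega)]
      · exact (hQcount m (mem_Icc.2 ⟨by omega, (mem_Icc.1 hm).2⟩)).trans b.le_succ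

/-- **Lemma (size-indexing Sperner families, recursive construction).**
For all `r, t ≥ 1` there is an `[A_r(t), A_r(A_r(t))]`-size-indexing Sperner family with
alphabet size `2r`: a family of multisets `Q m`, for `m` in the interval
`A_r(t) ≤ m ≤ A_r(A_r(t))`, such that `Q m` has exactly `m` elements, all elements lie in
`{1, …, 2r}`, and no `Q m` is a sub-multiset of any other `Q m'` with `m ≠ m'`. -/
theorem sperner_recursive (r t : ℕ) (hr : 1 ≤ r) (ht : 1 ≤ t) :
    ∃ Q : ℕ → Multiset ℕ,
      (∀ m ∈ Finset.Icc (A r t) (A r (A r t)),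
        (Q m).card = m ∧ ∀ x ∈ Q m, x ∈ Finset.Icc 1 (2 * r)) ∧
      (∀ m ∈ Finset.Icc (A r t) (A r (A r t)), ∀ m' ∈ Finset.Icc (A r t) (A r (A r t)),
        m ≠ m' → ¬ Q m ≤ Q m') := by
  induction r, hr using Nat.le_induction generalizing t with
  | base =>
    rw [A_one_left, A_one_left]
    exact ⟨_, isSizeIndexingSperner_two (2 * t)⟩
  | succ r hr ih =>
    have hT : 2 ≤ A (r + 1) t := (two_mul_le_A (by omega) ht).trans' (by omega)
    obtain ⟨Q, hQ, -⟩ := exists_isSizeIndexingSperner_iterate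
      (fun s hs => (two_mul_le_A hr hs).trans' (by omega)) ih (A (r + 1) t - 2) le_rfl
    rw [Nat.sub_add_cancel hT, ← A_succ_eq_iterate hr (by omega), A_one] at hQ
    exact ⟨Q, hQ.mono (by omega) (by omega) le_rfl⟩
end

section
/- There is a ticketed learning–unlearning scheme for the Count-to-Zero problem with space complexity (C_s = 1, C_t = O(log α⁻¹(m))): there exist a constant c > 0 and, for every m ∈ ℕ, an assignment of a one-bit auxiliary value and of tickets t_1, …, t_m, each ticket being a symbol from an alphabet of size at most c · α⁻¹(m)³, together with a function Unlearn taking a sub-multiset of presented tickets (and the auxiliary bit), such that for every I ⊆ [m], Unlearn applied to the multiset {t_i : i ∈ I} returns ⊥ if I = [m] and ⊤ if I ⊊ [m], and Unlearn applied to the empty request returns ⊥ exactly when m = 0. -/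
/-- The Ackermann function `α(t) = A_t(t)`. -/
def ackFn (t : ℕ) : ℕ := A t t

/-- The inverse-Ackermann function: the smallest `t` such that `n ≤ α(t)`. -/
noncomputable def invAck (n : ℕ) : ℕ := sInf {t | n ≤ ackFn t}

namespace CountToZero

section Scheme

variable (T : ℕ → Multiset ℕ)

/-- `T n` is the ticket multiset of a dataset of size `n + 1`, listed in some order. -/
noncomputable def ticket (m : ℕ) (i : Fin m) : ℕ := (T (m - 1)).toList.getD i 0

/-- The bit records whether the dataset is nonempty; a nonempty request is then complete exactly
when it is the ticket multiset of its own size. -/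
def unlearn (M : Multiset ℕ) (b : Bool) : Bool := b && decide (M ≠ T (Multiset.card M - 1))

variable {T}

lemma map_ticket_univ {k : ℕ} (hT : Multiset.card (T k) = k + 1) :
    Finset.univ.val.map (ticket T (k + 1)) = T k := by
  have hlen : (T k).toList.length = k + 1 := by rw [Multiset.length_toList, hT]
  rw [Fin.univ_val_map, ← Multiset.coe_toList (T k)]
  congr 1
  refine List.ext_getElem (by simp [hlen]) fun j _ hj => ?_
  rw [List.getElem_ofFn]
  exact List.getD_eq_getElem _ _ hj

lemma ticket_mem {m : ℕ} (hT : Multiset.card (T (m - 1)) = m) (i : Fin m) :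
    ticket T m i ∈ T (m - 1) := by
  have hi : (i : ℕ) < (T (m - 1)).toList.length := by rw [Multiset.length_toList, hT]; exact i.2
  rw [ticket, List.getD_eq_getElem _ _ hi, ← Multiset.mem_toList]
  exact List.getElem_mem hi

theorem unlearn_map_ticket (hcard : ∀ n, Multiset.card (T n) = n + 1)
    (hanti : ∀ k n, k < n → ¬T k ≤ T n) (m : ℕ) (I : Finset (Fin m)) :
    unlearn T (I.val.map (ticket T m)) (decide (m ≠ 0)) =
      if I = Finset.univ then false else true := by
  cases m with
  | zero => simp [unlearn, Subsingleton.elim I Finset.univ]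
  | succ k =>
    by_cases hI : I = Finset.univ
    · subst hI
      simp [unlearn, map_ticket_univ (hcard k), hcard]
    have hle : I.val.map (ticket T (k + 1)) ≤ T k :=
      map_ticket_univ (hcard k) ▸ Multiset.map_le_map (Finset.val_le_iff.2 I.subset_univ)
    have hlt : I.card < k + 1 := by
      simpa using Finset.card_lt_card (I.subset_univ.ssubset_of_ne hI)
    simp only [unlearn, hI, if_false, Bool.and_eq_true, decide_eq_true_eq]
    refine ⟨k.succ_ne_zero, fun heq => ?_⟩
    have hcardM : Multiset.card (I.val.map (ticket T (k + 1))) = I.card := by simp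
    have hcardEq := congrArg Multiset.card heq
    rw [hcard] at hcardEq
    exact hanti _ k (by omega) (heq ▸ hle)

end Scheme

open List (replicate)

section CountVectors

def splitFirstPos : List ℕ → Option (ℕ × ℕ × List ℕ)
  | [] => none
  | 0 :: t => (splitFirstPos t).map fun p => (p.1 + 1, p.2)
  | (a + 1) :: t => some (0, a, t)

/-- One step of a lexicographically decreasing walk through count vectors whose sum grows by one:
`z ++ (a+1) :: 0^e ++ [y] ↦ z ++ a :: (y+2) :: 0^e`, and, when only the last entry is nonzero,
`0^k ++ [x+1] ↦ 0^k ++ x :: 2 :: 0^k`. -/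
def next (l : List ℕ) : List ℕ :=
  match l.reverse with
  | [] => []
  | y :: t =>
    match splitFirstPos t with
    | some (e, a, q) => q.reverse ++ a :: (y + 2) :: replicate e 0
    | none => replicate t.length 0 ++ (y - 1) :: 2 :: replicate t.length 0

def vec (n : ℕ) : List ℕ := next^[n] [1]

lemma splitFirstPos_replicate (e : ℕ) : splitFirstPos (replicate e 0) = none := by
  induction e with
  | zero => rfl
  | succ e ih => simp [List.replicate_succ, splitFirstPos, ih]

lemma splitFirstPos_replicate_append (e a : ℕ) (q : List ℕ) :
    splitFirstPos (replicate e 0 ++ (a + 1) :: q) = some (e, a, q) := by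
  induction e with
  | zero => rfl
  | succ e ih => simp [List.replicate_succ, splitFirstPos, ih]

lemma next_move (z : List ℕ) (a e y : ℕ) :
    next (z ++ (a + 1) :: (replicate e 0 ++ [y])) = z ++ a :: (y + 2) :: replicate e 0 := by
  have h : (z ++ (a + 1) :: (replicate e 0 ++ [y])).reverse =
      y :: (replicate e 0 ++ (a + 1) :: z.reverse) := by
    simp
  simp [next, h, splitFirstPos_replicate_append]

lemma next_dead (k x : ℕ) :
    next (replicate k 0 ++ [x + 1]) = replicate k 0 ++ x :: 2 :: replicate k 0 := by
  have h : (replicate k 0 ++ [x + 1]).reverse = (x + 1) :: replicate k 0 := by simp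
  simp [next, h, splitFirstPos_replicate]

lemma eq_replicate_or_eq_append_cons (l : List ℕ) :
    (∃ k, l = replicate k 0) ∨ ∃ z a e, l = z ++ (a + 1) :: replicate e 0 := by
  induction l using List.reverseRecOn with
  | nil => exact .inl ⟨0, rfl⟩
  | append_singleton l c ih =>
    rcases c with _ | a
    · rcases ih with ⟨k, rfl⟩ | ⟨z, a, e, rfl⟩
      · exact .inl ⟨k + 1, by simp [List.replicate_succ']⟩
      · exact .inr ⟨z, a, e + 1, by simp [List.replicate_succ']⟩
    · exact .inr ⟨l, a, 0, rfl⟩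

lemma shape_of_sum_ne_zero {l : List ℕ} (hl : l.sum ≠ 0) :
    (∃ k x, l = replicate k 0 ++ [x + 1]) ∨
      ∃ z a e y, l = z ++ (a + 1) :: (replicate e 0 ++ [y]) := by
  rcases l.eq_nil_or_concat with rfl | ⟨l, y, rfl⟩
  · simp at hl
  rcases eq_replicate_or_eq_append_cons l with ⟨k, rfl⟩ | ⟨z, a, e, rfl⟩
  · obtain ⟨x, rfl⟩ : ∃ x, y = x + 1 := Nat.exists_eq_succ_of_ne_zero (by simpa using hl)
    exact .inl ⟨k, x, by simp⟩
  · exact .inr ⟨z, a, e, y, by simp⟩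

lemma sum_next {l : List ℕ} (hl : l.sum ≠ 0) : (next l).sum = l.sum + 1 := by
  rcases shape_of_sum_ne_zero hl with ⟨k, x, rfl⟩ | ⟨z, a, e, y, rfl⟩
  · simp [next_dead]
  · simp only [next_move, List.sum_append, List.sum_cons, List.sum_replicate, smul_zero,
      List.sum_nil]
    omega

lemma length_le_length_next {l : List ℕ} (hl : l.sum ≠ 0) : l.length ≤ (next l).length := by
  rcases shape_of_sum_ne_zero hl with ⟨k, x, rfl⟩ | ⟨z, a, e, y, rfl⟩
  · simp [next_dead]
  · simp [next_move]

lemma toLex_append_cons_lt (p s s' : List ℕ) (a : ℕ) :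
    toLex (p ++ a :: s).toFinsupp < toLex (p ++ (a + 1) :: s').toFinsupp := by
  refine Finsupp.Lex.lt_iff.2 ⟨p.length, fun j hj => ?_, ?_⟩
  · simp only [ofLex_toLex, List.toFinsupp_apply, List.getD_append _ _ _ _ hj]
  · simp

lemma toLex_next_lt {l : List ℕ} (hl : l.sum ≠ 0) :
    toLex (next l).toFinsupp < toLex l.toFinsupp := by
  rcases shape_of_sum_ne_zero hl with ⟨k, x, rfl⟩ | ⟨z, a, e, y, rfl⟩
  · rw [next_dead]
    exact toLex_append_cons_lt _ _ _ _
  · rw [next_move]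
    exact toLex_append_cons_lt _ _ _ _

lemma vec_succ (n : ℕ) : vec (n + 1) = next (vec n) := Function.iterate_succ_apply' next n [1]

lemma vec_add (a b : ℕ) : vec (a + b) = next^[b] (vec a) := by
  rw [vec, vec, add_comm, Function.iterate_add_apply]

lemma sum_vec (n : ℕ) : (vec n).sum = n + 1 := by
  induction n with
  | zero => rfl
  | succ n ih => rw [vec_succ, sum_next (by omega), ih]

lemma length_vec_mono : Monotone fun n => (vec n).length :=
  monotone_nat_of_le_succ fun n => by
    rw [vec_succ]
    exact length_le_length_next (by rw [sum_vec]; omega)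

lemma toLex_vec_strictAnti : StrictAnti fun n => toLex (vec n).toFinsupp :=
  strictAnti_nat_of_succ_lt fun n => by
    rw [vec_succ]
    exact toLex_next_lt (by rw [sum_vec]; omega)

/-- `drain (e+1) v` is the last entry of the vector reached from `v :: 0^e ++ [0]` once every
other entry is zero (see `exists_iterate_next_drain`). -/
def drain : ℕ → ℕ → ℕ
  | 0, v => v
  | e + 1, v => (fun x => drain e (x + 2))^[v] 0

lemma drain_succ_succ (e v : ℕ) : drain (e + 1) (v + 1) = drain e (drain (e + 1) v + 2) :=
  Function.iterate_succ_apply' _ _ _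

lemma le_drain (e v : ℕ) : v ≤ drain e v := by
  induction e generalizing v with
  | zero => rfl
  | succ e ihe =>
    induction v with
    | zero => exact Nat.zero_le _
    | succ v ihv => rw [drain_succ_succ]; have := ihe (drain (e + 1) v + 2); omega

lemma drain_mono (e : ℕ) : Monotone (drain e) := by
  cases e with
  | zero => exact monotone_id
  | succ e =>
    exact monotone_nat_of_le_succ fun v => by
      rw [drain_succ_succ]; exact (Nat.le_add_right _ 2).trans (le_drain _ _)

lemma drain_one (v : ℕ) : drain 1 v = 2 * v := by
  induction v with
  | zero => rfl
  | succ v ih => rw [drain_succ_succ, ih]; rfl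

lemma exists_iterate_next_drain (e h : ℕ) (z : List ℕ) (y : ℕ) : ∃ N,
    next^[N] (z ++ h :: (replicate e 0 ++ [y])) =
      z ++ replicate (e + 1) 0 ++ [(fun x => drain e (x + 2))^[h] y] := by
  induction e using Nat.strong_induction_on generalizing h z y with
  | _ e ihe =>
    induction h generalizing y with
    | zero => exact ⟨0, by simp [List.replicate_succ]⟩
    | succ h ih =>
      -- spending one unit of the entry `h + 1` drains the shorter vector that starts at `y + 2`
      obtain ⟨N₁, hN₁⟩ : ∃ N, next^[N] (z ++ (h + 1) :: (replicate e 0 ++ [y])) =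
          z ++ h :: (replicate e 0 ++ [drain e (y + 2)]) := by
        cases e with
        | zero => exact ⟨1, by simpa [drain] using next_move z h 0 y⟩
        | succ e =>
          obtain ⟨N, hN⟩ := ihe e (Nat.lt_succ_self e) (y + 2) (z ++ [h]) 0
          refine ⟨N + 1, ?_⟩
          rw [Function.iterate_succ_apply, next_move]
          simpa [List.replicate_succ', drain] using hN
      obtain ⟨N₂, hN₂⟩ := ih (drain e (y + 2))
      refine ⟨N₂ + N₁, ?_⟩
      rw [Function.iterate_add_apply, hN₁, hN₂, Function.iterate_succ_apply]

lemma exists_iterate_next_dead (j x : ℕ) : ∃ N,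
    next^[N + 1] (replicate (j + 1) 0 ++ [x + 1]) =
      replicate (2 * j + 3) 0 ++ [drain (j + 2) (x + 1)] := by
  obtain ⟨N₁, hN₁⟩ := exists_iterate_next_drain j 2 (replicate (j + 1) 0 ++ [x]) 0
  obtain ⟨N₂, hN₂⟩ :=
    exists_iterate_next_drain (j + 1) x (replicate (j + 1) 0) (drain (j + 1) 2)
  refine ⟨N₂ + N₁, ?_⟩
  have hdead : next (replicate (j + 1) 0 ++ [x + 1]) =
      (replicate (j + 1) 0 ++ [x]) ++ 2 :: (replicate j 0 ++ [0]) := by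
    rw [next_dead]; simp [List.replicate_succ']
  rw [Function.iterate_succ_apply, hdead, Function.iterate_add_apply, hN₁]
  simp only [List.append_assoc, List.cons_append, List.nil_append]
  rw [show (fun x => drain j (x + 2))^[2] 0 = drain (j + 1) 2 from rfl, hN₂,
    ← List.replicate_add]
  congr 2
  omega

end CountVectors

section Ackermann

lemma A_succ_succ (r t : ℕ) : A (r + 2) (t + 2) = A (r + 1) (A (r + 2) (t + 1)) := by
  rw [A]

lemma two_mul_le_A (r t : ℕ) : 2 * t ≤ A r t := by
  fun_induction A r t <;> omega

lemma A_strictMono (r : ℕ) : StrictMono (A r) := by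
  refine strictMono_nat_of_lt_succ fun t => ?_
  match r, t with
  | _, 0 => simp [A]
  | 0, 1 | 1, 1 => simp [A]
  | 0, t + 2 | 1, t + 2 => simp [A]
  | r + 2, t + 1 =>
    rw [A_succ_succ]
    have := two_mul_le_A (r + 1) (A (r + 2) (t + 1))
    have := two_mul_le_A (r + 2) (t + 1)
    omega

lemma A_le_A_succ (r t : ℕ) : A r t ≤ A (r + 1) t := by
  match r, t with
  | _, 0 | _, 1 => simp [A]
  | 0, t + 2 => simp [A]
  | r + 1, t + 2 =>
    rw [A_succ_succ]
    exact (A_strictMono (r + 1)).monotone (by have := two_mul_le_A (r + 2) (t + 1); omega)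

lemma ackFn_strictMono : StrictMono ackFn :=
  strictMono_nat_of_lt_succ fun t =>
    (A_strictMono t (Nat.lt_succ_self t)).trans_le (A_le_A_succ t _)

lemma lt_invAck {s n : ℕ} (h : ackFn s < n) : s < invAck n :=
  le_csInf ⟨n, ackFn_strictMono.id_le n⟩ fun _ ht =>
    ackFn_strictMono.lt_iff_lt.1 (h.trans_le ht)

lemma A_le_drain {e v : ℕ} (he : 1 ≤ e) : A e v ≤ drain e v := by
  fun_induction A e v with
  | case1 => exact Nat.zero_le _
  | case2 e =>
    obtain ⟨e, rfl⟩ := Nat.exists_eq_add_of_le' he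
    rw [drain_succ_succ]
    exact le_drain e 2
  | case3 => omega
  | case4 t => rw [drain_one]
  | case5 r t ih₁ ih₂ =>
    rw [drain_succ_succ]
    calc A (r + 1) (A (r + 2) (t + 1)) ≤ drain (r + 1) (A (r + 2) (t + 1)) := ih₂ (by omega)
      _ ≤ drain (r + 1) (drain (r + 2) (t + 1) + 2) :=
        drain_mono _ (by have := ih₁ (by omega); omega)

end Ackermann

section DeadTimes

/-- At a dead time every entry of `vec n` but the last is zero, and the next step doubles its
length `2 ^ (r + 1)`. -/
def IsDeadTime (r n : ℕ) : Prop :=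
  vec n = replicate (2 ^ (r + 1) - 1) 0 ++ [n + 1] ∧ ackFn (2 ^ r) ≤ n + 1

lemma isDeadTime_zero_one : IsDeadTime 0 1 :=
  ⟨rfl, by simp [ackFn, A]⟩

lemma IsDeadTime.exists_succ {r n : ℕ} (h : IsDeadTime r n) :
    ∃ n', n < n' ∧ IsDeadTime (r + 1) n' := by
  obtain ⟨hvec, hack⟩ := h
  have hpow : 2 ≤ 2 ^ (r + 1) := Nat.le_self_pow (Nat.succ_ne_zero r) 2
  have hpow' : 2 ^ (r + 2) = 2 * 2 ^ (r + 1) := pow_succ' 2 (r + 1)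
  obtain ⟨N, hN⟩ := exists_iterate_next_dead (2 ^ (r + 1) - 2) n
  rw [show 2 ^ (r + 1) - 2 + 2 = 2 ^ (r + 1) by omega] at hN
  have hvec' : vec (n + (N + 1)) =
      replicate (2 ^ (r + 2) - 1) 0 ++ [drain (2 ^ (r + 1)) (n + 1)] := by
    rw [vec_add, hvec, show 2 ^ (r + 1) - 1 = 2 ^ (r + 1) - 2 + 1 by omega, hN]
    congr 2
    omega
  have hlast : drain (2 ^ (r + 1)) (n + 1) = n + (N + 1) + 1 := by
    simpa [hvec'] using sum_vec (n + (N + 1))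
  have hle : 2 ^ (r + 1) ≤ n + 1 := by
    have := two_mul_le_A (2 ^ r) (2 ^ r)
    rw [ackFn] at hack
    rw [pow_succ]
    omega
  refine ⟨n + (N + 1), by omega, by rw [hvec', hlast], ?_⟩
  calc ackFn (2 ^ (r + 1)) ≤ A (2 ^ (r + 1)) (n + 1) := (A_strictMono _).monotone hle
    _ ≤ drain (2 ^ (r + 1)) (n + 1) := A_le_drain Nat.one_le_two_pow
    _ = n + (N + 1) + 1 := hlast

lemma exists_isDeadTime_bracket {n : ℕ} (hn : 1 ≤ n) :
    ∃ r n₁ n₂, IsDeadTime r n₁ ∧ IsDeadTime (r + 1) n₂ ∧ n₁ ≤ n ∧ n < n₂ := by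
  induction n, hn using Nat.le_induction with
  | base =>
    obtain ⟨n₂, h, hD⟩ := isDeadTime_zero_one.exists_succ
    exact ⟨0, 1, n₂, isDeadTime_zero_one, hD, le_rfl, h⟩
  | succ n _ ih =>
    obtain ⟨r, n₁, n₂, hD₁, hD₂, h₁, h₂⟩ := ih
    rcases (Nat.succ_le_of_lt h₂).lt_or_eq with h | rfl
    · exact ⟨r, n₁, n₂, hD₁, hD₂, by omega, h⟩
    · obtain ⟨n₃, h, hD₃⟩ := hD₂.exists_succ
      exact ⟨r + 1, n + 1, n₃, hD₂, hD₃, le_rfl, h⟩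

lemma length_vec_le (n : ℕ) : (vec n).length ≤ 4 * invAck (n + 1) := by
  rcases Nat.eq_zero_or_pos n with rfl | hn
  · have : 0 < invAck 1 := lt_invAck (by simp [ackFn, A])
    show 1 ≤ 4 * invAck 1
    omega
  obtain ⟨r, n₁, n₂, ⟨-, hack⟩, ⟨hvec₂, -⟩, h₁, h₂⟩ :=
    exists_isDeadTime_bracket hn
  have hpow : 1 ≤ 2 ^ r := Nat.one_le_two_pow
  have hinv : 2 ^ r - 1 < invAck (n + 1) :=
    lt_invAck ((ackFn_strictMono (show 2 ^ r - 1 < 2 ^ r by omega)).trans_le (by omega))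
  calc (vec n).length ≤ (vec n₂).length := length_vec_mono h₂.le
    _ = 4 * 2 ^ r := by
      rw [hvec₂, List.length_append, List.length_replicate, List.length_singleton, pow_succ,
        pow_succ]
      omega
    _ ≤ 4 * invAck (n + 1) := by omega

end DeadTimes

noncomputable def ticketSet (n : ℕ) : Multiset ℕ := Finsupp.toMultiset (vec n).toFinsupp

lemma card_ticketSet (n : ℕ) : Multiset.card (ticketSet n) = n + 1 := by
  rw [ticketSet, Finsupp.card_toMultiset, ← sum_vec n]
  exact (vec n).toFinsupp_sum

lemma not_ticketSet_le {k n : ℕ} (h : k < n) : ¬ticketSet k ≤ ticketSet n := by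
  rw [ticketSet, ticketSet, ← Finsupp.coe_orderIsoMultiset, OrderIso.le_iff_le]
  exact fun hle => (toLex_vec_strictAnti h).not_ge (Finsupp.toLex_monotone hle)

lemma lt_length_of_mem_ticketSet {n x : ℕ} (hx : x ∈ ticketSet n) : x < (vec n).length := by
  by_contra! h
  rw [ticketSet, Finsupp.mem_toMultiset, Finsupp.mem_support_iff,
    List.toFinsupp_apply_le _ _ h] at hx
  exact hx rfl

lemma ticket_ticketSet_lt {m : ℕ} (i : Fin m) : ticket ticketSet m i < 4 * invAck m ^ 3 := by
  have hm : m - 1 + 1 = m := Nat.sub_add_cancel i.pos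
  calc ticket ticketSet m i < (vec (m - 1)).length :=
        lt_length_of_mem_ticketSet (ticket_mem (by rw [card_ticketSet, hm]) i)
    _ ≤ 4 * invAck m := hm ▸ length_vec_le (m - 1)
    _ ≤ 4 * invAck m ^ 3 := Nat.mul_le_mul_left 4 (Nat.le_self_pow (by norm_num) _)

end CountToZero

/-- **Theorem (TiLU scheme for Count-to-Zero).** There is a ticketed learning–unlearning
scheme for Count-to-Zero with a one-bit auxiliary value and tickets that are symbols
from an alphabet of size at most `c · α⁻¹(m)³` (hence of bit-size `O(log α⁻¹(m))`):
for every `m`, the learner assigns an auxiliary bit `aux m` and tickets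
`tk m 1, …, tk m m`, and there is an unlearning map taking the multiset of presented
tickets and the auxiliary bit, which on the request `I ⊆ [m]` returns `⊥` (`false`)
if `I = [m]` and `⊤` (`true`) if `I ⊊ [m]`; in particular on the empty request it
returns `⊥` exactly when `m = 0`. -/
theorem ctz_ticketed_scheme :
    ∃ c : ℕ, 0 < c ∧
      ∃ (aux : ℕ → Bool) (tk : (m : ℕ) → Fin m → ℕ)
        (Unlearn : Multiset ℕ → Bool → Bool),
        (∀ (m : ℕ) (i : Fin m), tk m i < c * invAck m ^ 3) ∧
        (∀ (m : ℕ) (I : Finset (Fin m)),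
          Unlearn (I.val.map (tk m)) (aux m) =
            if I = (Finset.univ : Finset (Fin m)) then false else true) := by
  open CountToZero in
  exact ⟨4, by norm_num, fun m => decide (m ≠ 0), ticket ticketSet, unlearn ticketSet,
    fun _ => ticket_ticketSet_lt, unlearn_map_ticket card_ticketSet fun _ _ => not_ticketSet_le⟩
end

section
/- There is no ticketed learning–unlearning scheme for the Count-to-Zero problem with constant space complexity: for every pair of fixed constants c_s, c_t ∈ ℕ, there is no pair (Learn, Unlearn) valid for datasets of all sizes m ∈ ℕ in which the auxiliary information lies in {0,1}^{c_s} and every ticket lies in {0,1}^{c_t}, and which for every m and every I ⊆ [m] correctly returns ⊥ when I = [m] and ⊤ when I ⊊ [m]. -/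
/-!
Two datasets of sizes `m < n` with the same auxiliary string, whose ticket multisets satisfy
`T m ≤ T n`, break any scheme: the tickets of `n` contain a copy of `T m` held by a proper
subset `I ⊊ [n]`, and presenting it must give `⊤` for size `n` but `⊥` for size `m`. Such a
pair exists by Dickson's lemma, since auxiliary strings range over a finite set and ticket
multisets are multisets over a finite alphabet.
-/

instance Multiset.wellQuasiOrderedLE {α : Type*} [Finite α] : WellQuasiOrderedLE (Multiset α) := by
  classical exact Finsupp.orderIsoMultiset.wellQuasiOrderedLE_iff.1 inferInstance

theorem exists_lt_eq_and_multiset_le {α β : Type*} [Finite α] [Finite β] (a : ℕ → α)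
    (s : ℕ → Multiset β) : ∃ m n, m < n ∧ a m = a n ∧ s m ≤ s n :=
  (Finite.wellQuasiOrdered (· = ·)).prod wellQuasiOrdered_le fun k => (a k, s k)

theorem Multiset.exists_le_map_eq_of_le_map {α β : Type*} {f : α → β} {s : Multiset β}
    {t : Multiset α} (h : s ≤ t.map f) : ∃ u ≤ t, u.map f = s := by
  induction s using Multiset.induction generalizing t with
  | empty => exact ⟨0, Multiset.zero_le t, rfl⟩
  | cons b s ih =>
    obtain ⟨a, ha, rfl⟩ := Multiset.mem_map.mp (Multiset.mem_of_le h (Multiset.mem_cons_self b s))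
    obtain ⟨t', rfl⟩ := Multiset.exists_cons_of_mem ha
    rw [Multiset.map_cons, Multiset.cons_le_cons_iff] at h
    obtain ⟨u, hu, rfl⟩ := ih h
    exact ⟨a ::ₘ u, Multiset.cons_le_cons a hu, Multiset.map_cons f a u⟩

theorem Finset.exists_subset_map_val_eq_of_le {α β : Type*} {f : α → β} {s : Multiset β}
    {t : Finset α} (h : s ≤ t.val.map f) : ∃ I ⊆ t, I.val.map f = s := by
  obtain ⟨u, hu, rfl⟩ := Multiset.exists_le_map_eq_of_le_map h
  exact ⟨⟨u, Multiset.nodup_of_le hu t.nodup⟩, fun _ hx => Multiset.mem_of_le hu hx, rfl⟩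

/-- **Theorem (no constant-space TiLU scheme for Count-to-Zero).** For every pair of fixed
constants `c_s, c_t`, there is no ticketed learning–unlearning scheme for Count-to-Zero,
valid for datasets of every size `m`, in which the auxiliary information is a `c_s`-bit
string and every ticket is a `c_t`-bit string: no assignment of auxiliary strings `aux m`
and tickets `tk m 1, …, tk m m`, together with an unlearning map from (multiset of presented
tickets, auxiliary string) to `{⊥, ⊤}`, can return `⊥` (`false`) whenever the request is
`I = [m]` and `⊤` (`true`) whenever `I ⊊ [m]`. -/
theorem no_constant_space_ctz (cs ct : ℕ) :
    ¬ ∃ (aux : ℕ → Fin cs → Bool) (tk : (m : ℕ) → Fin m → Fin ct → Bool)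
        (Unlearn : Multiset (Fin ct → Bool) → (Fin cs → Bool) → Bool),
        ∀ (m : ℕ) (I : Finset (Fin m)),
          Unlearn (I.val.map (tk m)) (aux m) =
            if I = (Finset.univ : Finset (Fin m)) then false else true := by
  rintro ⟨aux, tk, Unlearn, hvalid⟩
  obtain ⟨m, n, hmn, haux, hle⟩ :=
    exists_lt_eq_and_multiset_le aux fun k => (Finset.univ : Finset (Fin k)).val.map (tk k)
  obtain ⟨I, -, hI⟩ := Finset.exists_subset_map_val_eq_of_le hle
  have hcard : I.card = m := by simpa using congrArg Multiset.card hI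
  have hI_ne : I ≠ Finset.univ := by
    rintro rfl
    rw [Finset.card_univ, Fintype.card_fin] at hcard
    omega
  have hfull := hvalid m Finset.univ
  have hpart := hvalid n I
  rw [if_neg hI_ne, hI, ← haux] at hpart
  rw [if_pos rfl, hpart] at hfull
  exact Bool.noConfusion hfull
end

section
/- For any non-trivial concept class H (i.e., H contains at least two distinct hypotheses), if there exists a ticketed learning–unlearning scheme for H with space complexity (C_s, C_t), valid for H-realizable datasets of all sizes, then there also exists a ticketed learning–unlearning scheme for the Count-to-Zero problem with the same space complexity (C_s, C_t). -/
/-- Empirical loss of hypothesis `h` on dataset `S` (sum of 0-1 losses). -/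
def empLoss {X : Type} (h : X → Bool) (S : List (X × Bool)) : ℕ :=
  (S.map fun z => if h z.1 = z.2 then 0 else 1).sum

/-- A dataset is `H`-realizable if some hypothesis in `H` has zero empirical loss on it. -/
def IsRealizable {X : Type} (H : Set (X → Bool)) (S : List (X × Bool)) : Prop :=
  ∃ h ∈ H, empLoss h S = 0

/-- The set of empirical risk minimizers in `H` on the dataset `S`. -/
def ERM {X : Type} (H : Set (X → Bool)) (S : List (X × Bool)) : Set (X → Bool) :=
  {h | h ∈ H ∧ ∀ g ∈ H, empLoss h S ≤ empLoss g S}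

/-- The surviving dataset `S ∖ S_I`: the examples of `S` at indices outside `I`,
kept in their original order. -/
def surviving {Z : Type} (S : List Z) (I : Finset (Fin S.length)) : List Z :=
  ((List.finRange S.length).filter fun i => decide (i ∉ I)).map S.get

/-- The unlearning request together with its tickets: the multiset of (example, ticket)
pairs over the indices in `I`. -/
def removedPairs {Z T : Type} (S : List Z) (tk : Fin S.length → T)
    (I : Finset (Fin S.length)) : Multiset (Z × T) :=
  I.val.map fun i => (S.get i, tk i)

/-! Since `H` is non-trivial, some point `x` admits both labels in `H`. Let `y` be the label the
learner does *not* predict at `x` on the empty dataset. A Count-to-Zero instance of size `m` is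
encoded by the realizable dataset of `m` copies of `(x, y)`: while a copy survives the deletion,
the model returned by `Unlearn` is an ERM of a nonempty realizable dataset and so predicts `y`
at `x`; once everything is deleted it is the empty-dataset model, which predicts `!y`. -/

section Dataset

variable {Z : Type}

theorem surviving_subset (S : List Z) (I : Finset (Fin S.length)) : surviving S I ⊆ S := by
  intro z hz
  obtain ⟨i, -, rfl⟩ := List.mem_map.mp hz
  exact List.get_mem S i

theorem surviving_eq_nil_iff (S : List Z) (I : Finset (Fin S.length)) :
    surviving S I = [] ↔ I = Finset.univ := by
  simp [surviving, Finset.eq_univ_iff_forall]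

theorem removedPairs_replicate {T : Type} (z : Z) (m : ℕ)
    (tk : Fin (List.replicate m z).length → T) (I : Finset (Fin m)) :
    removedPairs (List.replicate m z) tk (I.map (finCongr List.length_replicate.symm).toEmbedding) =
      (I.val.map fun i => tk (Fin.cast List.length_replicate.symm i)).map fun t => (z, t) := by
  simp [removedPairs, Multiset.map_map, finCongr]

end Dataset

section Learning

variable {X : Type} {H : Set (X → Bool)}

theorem empLoss_eq_zero_iff (h : X → Bool) (S : List (X × Bool)) :
    empLoss h S = 0 ↔ ∀ z ∈ S, h z.1 = z.2 := by
  rw [empLoss, List.sum_eq_zero_iff]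
  simp only [List.mem_map, forall_exists_index, and_imp, forall_apply_eq_imp_iff₂,
    ite_eq_left_iff, one_ne_zero, imp_false, not_not]

theorem isRealizable_iff (H : Set (X → Bool)) (S : List (X × Bool)) :
    IsRealizable H S ↔ ∃ h ∈ H, ∀ z ∈ S, h z.1 = z.2 := by
  simp only [IsRealizable, empLoss_eq_zero_iff]

theorem IsRealizable.mono {S T : List (X × Bool)} (hS : IsRealizable H S) (hTS : T ⊆ S) :
    IsRealizable H T := by
  obtain ⟨h, hH, hfit⟩ := (isRealizable_iff H S).mp hS
  exact (isRealizable_iff H T).mpr ⟨h, hH, fun z hz => hfit z (hTS hz)⟩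

theorem apply_eq_of_mem_ERM {S : List (X × Bool)} {g : X → Bool}
    (hS : IsRealizable H S) (hg : g ∈ ERM H S) {z : X × Bool} (hz : z ∈ S) : g z.1 = z.2 := by
  obtain ⟨h, hH, hh⟩ := hS
  have hg0 : empLoss g S = 0 := Nat.le_zero.mp (hh ▸ hg.2 h hH)
  exact (empLoss_eq_zero_iff g S).mp hg0 z hz

theorem exists_forall_exists_mem_apply_eq {h₁ h₂ : X → Bool} (h₁H : h₁ ∈ H) (h₂H : h₂ ∈ H)
    (hne : h₁ ≠ h₂) : ∃ x, ∀ y, ∃ h ∈ H, h x = y := by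
  obtain ⟨x, hx⟩ := Function.ne_iff.mp hne
  refine ⟨x, fun y => ?_⟩
  by_cases h₁y : h₁ x = y
  · exact ⟨h₁, h₁H, h₁y⟩
  · refine ⟨h₂, h₂H, ?_⟩
    revert hx h₁y
    cases h₁ x <;> cases h₂ x <;> cases y <;> decide

end Learning

theorem tilu_to_ctz_general {X : Type}
    (H : Set (X → Bool)) (h₁ h₂ : X → Bool)
    (h₁H : h₁ ∈ H) (h₂H : h₂ ∈ H) (hne : h₁ ≠ h₂)
    (cs ct : ℕ)
    (Learn : (S : List (X × Bool)) →
      (X → Bool) × (Fin cs → Bool) × (Fin S.length → Fin ct → Bool))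
    (Unlearn : Multiset ((X × Bool) × (Fin ct → Bool)) → (Fin cs → Bool) → (X → Bool))
    (hERM : ∀ S, IsRealizable H S → (Learn S).1 ∈ ERM H S)
    (hUn : ∀ S, IsRealizable H S → ∀ I : Finset (Fin S.length),
      Unlearn (removedPairs S (Learn S).2.2 I) (Learn S).2.1 = (Learn (surviving S I)).1) :
    ∃ (CtzLearn : (m : ℕ) → (Fin cs → Bool) × (Fin m → Fin ct → Bool))
      (CtzUnlearn : Multiset (Fin ct → Bool) → (Fin cs → Bool) → Bool),
      ∀ (m : ℕ) (I : Finset (Fin m)),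
        CtzUnlearn (I.val.map (CtzLearn m).2) (CtzLearn m).1 =
          if I = (Finset.univ : Finset (Fin m)) then false else true := by
  obtain ⟨x, hx⟩ := exists_forall_exists_mem_apply_eq h₁H h₂H hne
  set y := !(Learn []).1 x with hy
  obtain ⟨h, hH, hhy⟩ := hx y
  have hS : ∀ m, IsRealizable H (List.replicate m (x, y)) := fun m => (isRealizable_iff H _).mpr
    ⟨h, hH, fun z hz => (List.eq_of_mem_replicate hz).symm ▸ hhy⟩
  refine ⟨fun m => ((Learn (List.replicate m (x, y))).2.1,
      fun i => (Learn (List.replicate m (x, y))).2.2 (Fin.cast List.length_replicate.symm i)),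
    fun tks aux => Unlearn (tks.map fun t => ((x, y), t)) aux x == y, fun m I => ?_⟩
  dsimp only
  rw [← removedPairs_replicate, hUn _ (hS m)]
  set I' := I.map (finCongr (List.length_replicate (n := m) (a := (x, y))).symm).toEmbedding
  have hI' : I = Finset.univ ↔ I' = Finset.univ := by
    rw [← Finset.map_univ_equiv (finCongr List.length_replicate.symm), Finset.map_inj]
  simp only [hI']
  split_ifs with hI
  · rw [(surviving_eq_nil_iff _ _).mpr hI]
    simp [hy]
  · have hreal := (hS m).mono (surviving_subset _ I')
    obtain ⟨z, hz⟩ := List.exists_mem_of_ne_nil _ (mt (surviving_eq_nil_iff _ _).mp hI)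
    have hfit := apply_eq_of_mem_ERM hreal (hERM _ hreal) hz
    rw [List.eq_of_mem_replicate (surviving_subset _ _ hz)] at hfit
    simpa using hfit

/-- **Lemma (reduction from any non-trivial class to Count-to-Zero).** Let `H` be a
non-trivial concept class (it contains two distinct hypotheses `h₁ ≠ h₂`). If there is a
ticketed learning–unlearning scheme `(Learn, Unlearn)` for `H` with `c_s`-bit auxiliary
information and `c_t`-bit tickets, valid for all `H`-realizable datasets, then there is a
ticketed learning–unlearning scheme for the Count-to-Zero problem with the same space
complexity `(c_s, c_t)`. -/
theorem tilu_to_ctz {X : Type} [Fintype X] [DecidableEq X]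
    (H : Set (X → Bool)) (h₁ h₂ : X → Bool)
    (h₁H : h₁ ∈ H) (h₂H : h₂ ∈ H) (hne : h₁ ≠ h₂)
    (cs ct : ℕ)
    (Learn : (S : List (X × Bool)) →
      (X → Bool) × (Fin cs → Bool) × (Fin S.length → Fin ct → Bool))
    (Unlearn : Multiset ((X × Bool) × (Fin ct → Bool)) → (Fin cs → Bool) → (X → Bool))
    (hERM : ∀ S, IsRealizable H S → (Learn S).1 ∈ ERM H S)
    (hUn : ∀ S, IsRealizable H S → ∀ I : Finset (Fin S.length),
      Unlearn (removedPairs S (Learn S).2.2 I) (Learn S).2.1 = (Learn (surviving S I)).1) :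
    ∃ (CtzLearn : (m : ℕ) → (Fin cs → Bool) × (Fin m → Fin ct → Bool))
      (CtzUnlearn : Multiset (Fin ct → Bool) → (Fin cs → Bool) → Bool),
      ∀ (m : ℕ) (I : Finset (Fin m)),
        CtzUnlearn (I.val.map (CtzLearn m).2) (CtzLearn m).1 =
          if I = (Finset.univ : Finset (Fin m)) then false else true :=
  tilu_to_ctz_general H h₁ h₂ h₁H h₂H hne cs ct Learn Unlearn hERM hUn
end

section
/- For any C-bit mergeable concept class H over a finite domain X, and every dataset size n ≥ 2, there exists a ticketed learning–unlearning scheme for H (valid for H-realizable datasets of size n) with space complexity (C_s = ⌈log₂|H|⌉, C_t = O(C · log n)); concretely, one may take each ticket to have at most ⌈log₂ n⌉ · (C + 1) bits. -/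
/-!
Place the examples at the leaves of a complete binary tree of depth `d = ⌈log₂ n⌉`. The ticket
of example `i` records, at every level of its root-to-leaf path, which way the path turns and the
encoding of the sibling subtree. To unlearn, every subtree containing a removed example is rebuilt
bottom-up by `Merge` from its two children; a child containing no removed example is the sibling
of a subtree that does, so its encoding is stored in the ticket of some removed example.
The empty request is answered by the auxiliary string, which indexes the learned hypothesis in `H`.
-/

section Survivors

variable {Z : Type}

def survivors : List Z → (ℕ → Bool) → List Z
  | [], _ => []
  | z :: S, r =>
    if r 0 then survivors S (fun j => r (j + 1)) else z :: survivors S (fun j => r (j + 1))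

theorem survivors_append (L R : List Z) (r : ℕ → Bool) :
    survivors (L ++ R) r = survivors L r ++ survivors R (fun j => r (j + L.length)) := by
  induction L generalizing r with
  | nil => rfl
  | cons z L ih => cases h : r 0 <;> simp [survivors, h, ih, Nat.add_assoc]

theorem survivors_take_append_drop (S : List Z) (r : ℕ → Bool) (m : ℕ) :
    survivors S r = survivors (S.take m) r ++ survivors (S.drop m) (fun j => r (j + m)) := by
  rcases le_or_gt m S.length with hm | hm
  · conv_lhs => rw [← S.take_append_drop m]
    rw [survivors_append, List.length_take_of_le hm]
  · simp [List.drop_eq_nil_of_le hm.le, List.take_of_length_le hm.le, survivors]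

theorem survivors_congr {S : List Z} {r r' : ℕ → Bool} (h : ∀ j < S.length, r j = r' j) :
    survivors S r = survivors S r' := by
  induction S generalizing r r' with
  | nil => rfl
  | cons z S ih =>
    simp only [survivors, h 0 (by simp), ih fun j hj => h (j + 1) (by simpa using hj)]

theorem survivors_of_forall_eq_false {S : List Z} {r : ℕ → Bool}
    (h : ∀ j < S.length, r j = false) :
    survivors S r = S := by
  rw [survivors_congr h]
  clear h
  induction S with
  | nil => rfl
  | cons z S ih => simp [survivors, ih]

theorem survivors_sublist (S : List Z) (r : ℕ → Bool) : (survivors S r).Sublist S := by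
  induction S generalizing r with
  | nil => exact List.Sublist.slnil
  | cons z S ih =>
    unfold survivors
    split
    · exact (ih _).cons z
    · exact (ih _).cons_cons z

theorem survivors_eq_map_get (S : List Z) (r : ℕ → Bool) :
    survivors S r = ((List.finRange S.length).filter fun i : Fin S.length => !r i).map S.get := by
  induction S generalizing r with
  | nil => rfl
  | cons z S ih =>
    cases h : r 0 <;>
      simp [survivors, h, ih, List.finRange_succ, List.filter_map, Function.comp_def]

theorem surviving_eq_survivors (S : List Z) (I : Finset (Fin S.length)) :
    surviving S I = survivors S fun j => decide (j ∈ I.val.map Fin.val) := by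
  rw [survivors_eq_map_get, surviving]
  congr 1
  refine List.filter_congr fun i _ => ?_
  simp [Fin.val_inj]

end Survivors

theorem IsRealizable.of_subset {X : Type} {H : Set (X → Bool)} {S L : List (X × Bool)}
    (hS : IsRealizable H S) (hL : L ⊆ S) : IsRealizable H L := by
  obtain ⟨h, hH, hloss⟩ := hS
  refine ⟨h, hH, ?_⟩
  simp only [empLoss, List.sum_eq_zero_iff, List.mem_map] at hloss ⊢
  rintro _ ⟨z, hz, rfl⟩
  exact hloss _ ⟨z, hL hz, rfl⟩

theorem Multiset.epsilon_mem_eq {α : Type*} [Nonempty α] {m : Multiset α} {c : α} (hm : m ≠ 0)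
    (h : ∀ x ∈ m, x = c) : Classical.epsilon (· ∈ m) = c :=
  h _ (Classical.epsilon_spec (Multiset.exists_mem_of_ne_zero hm))

section MergeTree

variable {Z Code : Type} (enc : List Z → Code) (merge : Code → Code → Code)

/-- Entry `0` of the ticket of position `i` in `S` (of length at most `2 ^ d`) says whether `i`
lies in the right half of `S` and holds the code of the other half; the remaining entries are
the ticket of `i` within its own half. -/
def ticket : (d : ℕ) → List Z → ℕ → Fin d → Bool × Code
  | 0, _, _ => finZeroElim
  | d + 1, S, i =>
    if 2 ^ d ≤ i then
      Fin.cons (true, enc (S.take (2 ^ d))) (ticket d (S.drop (2 ^ d)) (i - 2 ^ d))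
    else Fin.cons (false, enc (S.drop (2 ^ d))) (ticket d (S.take (2 ^ d)) i)

theorem ticket_succ_zero (d : ℕ) (S : List Z) (i : ℕ) :
    ticket enc (d + 1) S i 0 =
      (decide (2 ^ d ≤ i), enc (if 2 ^ d ≤ i then S.take (2 ^ d) else S.drop (2 ^ d))) := by
  by_cases h : 2 ^ d ≤ i <;> simp [ticket, h]

theorem tail_ticket_succ (d : ℕ) (S : List Z) (i : ℕ) :
    Fin.tail (ticket enc (d + 1) S i) =
      if 2 ^ d ≤ i then ticket enc d (S.drop (2 ^ d)) (i - 2 ^ d)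
      else ticket enc d (S.take (2 ^ d)) i := by
  by_cases h : 2 ^ d ≤ i <;> simp [ticket, h]

open Classical in
noncomputable def sideCode [Nonempty Code] {d : ℕ}
    (rec : Multiset (Fin d → Bool × Code) → Code) (M : Multiset (Fin (d + 1) → Bool × Code))
    (b : Bool) : Code :=
  -- When no ticket points into half `b`, every ticket points into the other half and stores the
  -- code of half `b`, so any of them will do.
  if M.filter (fun t => (t 0).1 = b) = 0 then
    Classical.epsilon (· ∈ (M.filter fun t => (t 0).1 = !b).map fun t => (t 0).2)
  else rec ((M.filter fun t => (t 0).1 = b).map Fin.tail)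

theorem sideCode_eq [Nonempty Code] {d : ℕ} {rec : Multiset (Fin d → Bool × Code) → Code}
    {M : Multiset (Fin (d + 1) → Bool × Code)} {b : Bool} {c : Code} (hM : M ≠ 0)
    (hrec : M.filter (fun t => (t 0).1 = b) ≠ 0 →
      rec ((M.filter fun t => (t 0).1 = b).map Fin.tail) = c)
    (hstored : M.filter (fun t => (t 0).1 = b) = 0 → ∀ t ∈ M, (t 0).2 = c) :
    sideCode rec M b = c := by
  classical
  unfold sideCode
  split_ifs with hb
  · have hother : ∀ t ∈ M, (t 0).1 = !b := fun t ht =>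
      Bool.eq_not_iff.mpr (Multiset.filter_eq_nil.mp hb t ht)
    refine Multiset.epsilon_mem_eq ?_ ?_
    · simpa [Multiset.filter_eq_self.mpr hother] using hM
    · simp only [Multiset.mem_map, Multiset.mem_filter]
      rintro _ ⟨t, ⟨ht, -⟩, rfl⟩
      exact hstored hb t ht
  · exact hrec hb

theorem filter_map_ticket (d : ℕ) (S : List Z) (A : Multiset ℕ) (b : Bool) :
    (A.map (ticket enc (d + 1) S)).filter (fun t => (t 0).1 = b) =
      (A.filter fun i => decide (2 ^ d ≤ i) = b).map (ticket enc (d + 1) S) := by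
  rw [Multiset.filter_map]
  congr 1
  exact Multiset.filter_congr fun i _ => by simp [ticket_succ_zero]

theorem sideCode_map_ticket_false [Nonempty Code] {d : ℕ}
    {rec : Multiset (Fin d → Bool × Code) → Code} {S : List Z} {A : Multiset ℕ}
    (hA0 : A ≠ 0)
    (hrec : ∀ A' : Multiset ℕ, A' ≠ 0 → (∀ i ∈ A', i < 2 ^ d) →
      rec (A'.map (ticket enc d (S.take (2 ^ d)))) =
        enc (survivors (S.take (2 ^ d)) fun j => decide (j ∈ A'))) :
    sideCode rec (A.map (ticket enc (d + 1) S)) false =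
      enc (survivors (S.take (2 ^ d)) fun j => decide (j ∈ A)) := by
  have hlen : (S.take (2 ^ d)).length ≤ 2 ^ d := List.length_take_le _ _
  refine sideCode_eq (by simpa using hA0) (fun hne => ?_) (fun hempty => ?_)
  · rw [filter_map_ticket] at hne ⊢
    set A₀ := A.filter fun i => decide (2 ^ d ≤ i) = false
    have hA₀ : ∀ i ∈ A₀, i < 2 ^ d := fun i hi => by
      simpa using (Multiset.mem_filter.mp hi).2
    have htail :
        A₀.map (Fin.tail ∘ ticket enc (d + 1) S) = A₀.map (ticket enc d (S.take (2 ^ d))) :=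
      Multiset.map_congr rfl fun i hi => by simp [tail_ticket_succ, Nat.not_le.mpr (hA₀ i hi)]
    rw [Multiset.map_map, htail, hrec A₀ (by simpa using hne) hA₀]
    refine congrArg enc (survivors_congr fun j hj => ?_)
    simp [A₀, hj.trans_le hlen]
  · rw [filter_map_ticket, Multiset.map_eq_zero, Multiset.filter_eq_nil] at hempty
    have hfar : ∀ i ∈ A, 2 ^ d ≤ i := fun i hi => by simpa using hempty i hi
    rintro _ ht
    obtain ⟨i, hi, rfl⟩ := Multiset.mem_map.mp ht
    rw [ticket_succ_zero, if_pos (hfar i hi), survivors_of_forall_eq_false]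
    exact fun j hj => by simpa using fun hjA => absurd (hfar j hjA) (by omega)

theorem mem_map_sub_filter_le {A : Multiset ℕ} {m j : ℕ} :
    j ∈ (A.filter fun i => decide (m ≤ i) = true).map (· - m) ↔ j + m ∈ A := by
  simp only [Multiset.mem_map, Multiset.mem_filter, decide_eq_true_eq]
  constructor
  · rintro ⟨i, ⟨hi, hle⟩, rfl⟩
    rwa [Nat.sub_add_cancel hle]
  · exact fun h => ⟨j + m, ⟨h, Nat.le_add_left _ _⟩, Nat.add_sub_cancel _ _⟩

theorem sideCode_map_ticket_true [Nonempty Code] {d : ℕ}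
    {rec : Multiset (Fin d → Bool × Code) → Code} {S : List Z} {A : Multiset ℕ}
    (hA0 : A ≠ 0)
    (hA : ∀ i ∈ A, i < 2 ^ (d + 1))
    (hrec : ∀ A' : Multiset ℕ, A' ≠ 0 → (∀ i ∈ A', i < 2 ^ d) →
      rec (A'.map (ticket enc d (S.drop (2 ^ d)))) =
        enc (survivors (S.drop (2 ^ d)) fun j => decide (j ∈ A'))) :
    sideCode rec (A.map (ticket enc (d + 1) S)) true =
      enc (survivors (S.drop (2 ^ d)) fun j => decide (j + 2 ^ d ∈ A)) := by
  refine sideCode_eq (by simpa using hA0) (fun hne => ?_) (fun hempty => ?_)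
  · rw [filter_map_ticket] at hne ⊢
    set A₁ := (A.filter fun i => decide (2 ^ d ≤ i) = true).map (· - 2 ^ d)
    have hA₁ : ∀ i ∈ A₁, i < 2 ^ d := fun i hi => by
      have := hA _ (mem_map_sub_filter_le.mp hi)
      rw [pow_succ] at this
      omega
    have htail : (A.filter fun i => decide (2 ^ d ≤ i) = true).map
        (Fin.tail ∘ ticket enc (d + 1) S) = A₁.map (ticket enc d (S.drop (2 ^ d))) := by
      rw [Multiset.map_map]
      exact Multiset.map_congr rfl fun i hi => by simp_all [tail_ticket_succ]
    rw [Multiset.map_map, htail, hrec A₁ (by simpa [A₁] using hne) hA₁]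
    simp only [A₁, mem_map_sub_filter_le]
  · rw [filter_map_ticket, Multiset.map_eq_zero, Multiset.filter_eq_nil] at hempty
    have hnear : ∀ i ∈ A, i < 2 ^ d := fun i hi => by simpa using hempty i hi
    rintro _ ht
    obtain ⟨i, hi, rfl⟩ := Multiset.mem_map.mp ht
    rw [ticket_succ_zero, if_neg (Nat.not_le.mpr (hnear i hi)), survivors_of_forall_eq_false]
    exact fun j _ => by simpa using fun hjA => absurd (hnear _ hjA) (by omega)

noncomputable def rebuild [Nonempty Code] : (d : ℕ) → Multiset (Fin d → Bool × Code) → Code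
  | 0, _ => enc []
  | d + 1, M => merge (sideCode (rebuild d) M false) (sideCode (rebuild d) M true)

theorem rebuild_map_ticket [Nonempty Code] (d : ℕ) {S : List Z} (hS : S.length ≤ 2 ^ d)
    (hmerge : ∀ L R, (L ++ R).Sublist S → enc (L ++ R) = merge (enc L) (enc R))
    {A : Multiset ℕ} (hA0 : A ≠ 0) (hA : ∀ i ∈ A, i < 2 ^ d) :
    rebuild enc merge d (A.map (ticket enc d S)) = enc (survivors S fun j => decide (j ∈ A)) := by
  induction d generalizing S A with
  | zero =>
    obtain ⟨i, hi⟩ := Multiset.exists_mem_of_ne_zero hA0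
    have h0 : 0 ∈ A := by rwa [← Nat.lt_one_iff.mp (hA i hi)]
    match S, hS with
    | [], _ => rfl
    | [_], _ => simp [rebuild, survivors, h0]
  | succ d ih =>
    have hdrop : (S.drop (2 ^ d)).length ≤ 2 ^ d := by
      rw [List.length_drop, pow_succ] at *
      omega
    have hsplit := survivors_take_append_drop S (fun j => decide (j ∈ A)) (2 ^ d)
    rw [rebuild,
      sideCode_map_ticket_false enc hA0 fun A' => ih (List.length_take_le _ _)
        fun L R h => hmerge L R (h.trans (S.take_sublist _)),
      sideCode_map_ticket_true enc hA0 hA fun A' => ih hdrop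
        fun L R h => hmerge L R (h.trans (S.drop_sublist _)),
      hsplit, hmerge _ _ (hsplit ▸ survivors_sublist _ _)]

end MergeTree

theorem Finset.exists_bits_leftInvOn {α : Type*} [Nonempty α] (s : Finset α) :
    ∃ (e : α → Fin (Nat.clog 2 s.card) → Bool)
      (dec : (Fin (Nat.clog 2 s.card) → Bool) → α),
      ∀ x ∈ s, dec (e x) = x := by
  classical
  obtain ⟨f⟩ : Nonempty (s ↪ (Fin (Nat.clog 2 s.card) → Bool)) :=
    Function.Embedding.nonempty_of_card_le (by simpa using Nat.le_pow_clog one_lt_two _)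
  let e (x : α) : Fin (Nat.clog 2 s.card) → Bool :=
    if hx : x ∈ s then f ⟨x, hx⟩ else fun _ => false
  have he : Set.InjOn e s := fun x hx y hy hxy => by
    have hx : x ∈ s := hx
    have hy : y ∈ s := hy
    simpa [e, hx, hy] using hxy
  exact ⟨e, Function.invFunOn e s, fun x hx => he.leftInvOn_invFunOn hx⟩

def ticketBitsEquiv (d C : ℕ) :
    (Fin d → Bool × (Fin C → Bool)) ≃ (Fin (d * (C + 1)) → Bool) :=
  (Equiv.arrowCongr (Equiv.refl _) (Fin.consEquiv fun _ => Bool)).trans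
    ((Equiv.curry _ _ _).symm.trans (Equiv.arrowCongr finProdFinEquiv (Equiv.refl _)))

theorem tilu_for_mergeable_general {X : Type}
    (H : Finset (X → Bool)) (C : ℕ)
    (Encode : List (X × Bool) → Fin C → Bool)
    (Decode : (Fin C → Bool) → X → Bool)
    (Merge : (Fin C → Bool) → (Fin C → Bool) → Fin C → Bool)
    (hdecH : ∀ b, Decode b ∈ H)
    (hdecERM : ∀ S, IsRealizable ↑H S → Decode (Encode S) ∈ ERM ↑H S)
    (hmerge : ∀ S₁ S₂, IsRealizable ↑H (S₁ ++ S₂) →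
      Encode (S₁ ++ S₂) = Merge (Encode S₁) (Encode S₂)) :
    ∀ n : ℕ, 2 ≤ n →
      ∃ (Learn : (S : List (X × Bool)) →
            (X → Bool) × (Fin (Nat.clog 2 H.card) → Bool) ×
              (Fin S.length → Fin (Nat.clog 2 n * (C + 1)) → Bool))
        (Unlearn : Multiset ((X × Bool) × (Fin (Nat.clog 2 n * (C + 1)) → Bool)) →
            (Fin (Nat.clog 2 H.card) → Bool) → (X → Bool)),
        ∀ S : List (X × Bool), S.length ≤ n → IsRealizable ↑H S →
          (Learn S).1 ∈ ERM ↑H S ∧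
          ∀ I : Finset (Fin S.length),
            Unlearn (removedPairs S (Learn S).2.2 I) (Learn S).2.1 =
              (Learn (surviving S I)).1 := by
  intro n _
  classical
  obtain ⟨eH, decH, hdecH'⟩ := H.exists_bits_leftInvOn
  set d := Nat.clog 2 n
  let tk := ticketBitsEquiv d C
  refine ⟨fun S => (Decode (Encode S), eH (Decode (Encode S)), fun i => tk (ticket Encode d S i)),
    fun M a => if M = 0 then decH a
      else Decode (rebuild Encode Merge d (M.map fun p => tk.symm p.2)),
    fun S hlen hreal => ⟨hdecERM S hreal, fun I => ?_⟩⟩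
  rcases I.eq_empty_or_nonempty with rfl | ⟨i, hi⟩
  · have hS : surviving S ∅ = S := by
      rw [surviving_eq_survivors, survivors_of_forall_eq_false]
      simp
    simpa [removedPairs, hS] using hdecH' _ (hdecH _)
  · have hS : S.length ≤ 2 ^ d := hlen.trans (Nat.le_pow_clog one_lt_two n)
    have hM : removedPairs S (fun i => tk (ticket Encode d S i)) I ≠ 0 := by
      simpa [removedPairs] using Finset.nonempty_iff_ne_empty.mp ⟨i, hi⟩
    have hA : (removedPairs S (fun i => tk (ticket Encode d S i)) I).map (fun p => tk.symm p.2) =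
        (I.val.map Fin.val).map (ticket Encode d S) := by
      simp [removedPairs, Multiset.map_map]
    simp only [if_neg hM, hA]
    rw [rebuild_map_ticket Encode Merge d hS (fun L R h => hmerge L R (hreal.of_subset h.subset))
      (by simpa using Finset.nonempty_iff_ne_empty.mp ⟨i, hi⟩)
      (by simpa using fun j _ => j.isLt.trans_le hS), surviving_eq_survivors]

/-- **Theorem (TiLU scheme for mergeable classes).** Let `H` be a `C`-bit mergeable concept
class over a finite domain `X`, as witnessed by `Encode` (permutation-invariant), `Decode`
(mapping into `H`, with `Decode (Encode S) ∈ ERM_H(S)` for realizable `S`) and `Merge`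
(with `Encode (S₁ ∪ S₂) = Merge (Encode S₁) (Encode S₂)` whenever `S₁ ∪ S₂` is realizable).
Then for every dataset size `n ≥ 2` there is a ticketed learning–unlearning scheme for `H`,
valid for `H`-realizable datasets of size (at most) `n`, whose auxiliary information has
`⌈log₂ |H|⌉` bits and each of whose tickets has `⌈log₂ n⌉ · (C + 1)` bits. -/
theorem tilu_for_mergeable {X : Type} [Fintype X] [DecidableEq X]
    (H : Finset (X → Bool)) (C : ℕ)
    (Encode : List (X × Bool) → Fin C → Bool)
    (Decode : (Fin C → Bool) → X → Bool)
    (Merge : (Fin C → Bool) → (Fin C → Bool) → Fin C → Bool)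
    (hperm : ∀ S₁ S₂ : List (X × Bool), S₁.Perm S₂ → Encode S₁ = Encode S₂)
    (hdecH : ∀ b, Decode b ∈ H)
    (hdecERM : ∀ S, IsRealizable ↑H S → Decode (Encode S) ∈ ERM ↑H S)
    (hmerge : ∀ S₁ S₂, IsRealizable ↑H (S₁ ++ S₂) →
      Encode (S₁ ++ S₂) = Merge (Encode S₁) (Encode S₂)) :
    ∀ n : ℕ, 2 ≤ n →
      ∃ (Learn : (S : List (X × Bool)) →
            (X → Bool) × (Fin (Nat.clog 2 H.card) → Bool) ×
              (Fin S.length → Fin (Nat.clog 2 n * (C + 1)) → Bool))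
        (Unlearn : Multiset ((X × Bool) × (Fin (Nat.clog 2 n * (C + 1)) → Bool)) →
            (Fin (Nat.clog 2 H.card) → Bool) → (X → Bool)),
        ∀ S : List (X × Bool), S.length ≤ n → IsRealizable ↑H S →
          (Learn S).1 ∈ ERM ↑H S ∧
          ∀ I : Finset (Fin S.length),
            Unlearn (removedPairs S (Learn S).2.2 I) (Learn S).2.1 =
              (Learn (surviving S I)).1 :=
  tilu_for_mergeable_general H C Encode Decode Merge hdecH hdecERM hmerge
end

section
/- There exists a (central, non-ticketed) learning–unlearning scheme for the class H_thresh of one-dimensional threshold functions over X = {1, …, |X|}, valid for H_thresh-realizable datasets of size n, with space complexity C = O((log|X|) · (log n)): that is, there exist Learn and Unlearn such that Learn(S) returns h ∈ ERM_{H_thresh}(S) together with auxiliary information aux of O((log|X|)(log n)) bits, and for every I ⊆ [n], Unlearn(S_I, aux) returns the same hypothesis that Learn returns on S ∖ S_I. -/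
/-- The unlearning request `S_I`: the examples of `S` at indices in `I`,
in their original order. -/
def removedList {Z : Type} (S : List Z) (I : Finset (Fin S.length)) : List Z :=
  ((List.finRange S.length).filter fun i => decide (i ∈ I)).map S.get

/-- The threshold function `h_{>a}(x) = 1{x > a}` on the domain `{1, …, N}`, represented on
`Fin N` (where `x : Fin N` stands for the domain point `x + 1`): `h_{>a} x = 1{a ≤ x}`. -/
def thrFn (N : ℕ) (a : ℕ) : Fin N → Bool := fun x => decide (a ≤ (x : ℕ))

/-- The class of one-dimensional threshold functions over `{1, …, N}`,
indexed by `a ∈ {0, 1, …, N}`. -/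
def Hthr (N : ℕ) : Set (Fin N → Bool) := {h | ∃ a ≤ N, h = thrFn N a}

/-!
The learner runs a dyadic binary search for a threshold with zero empirical loss: at a node `m`
it stops if `h_{>m}` is consistent, and otherwise moves right exactly when some negative example
lies at or above `m`. For a dataset consistent with `h_{>a}` that rule always points towards `a`,
and the same holds for every subset of the dataset, with the same `a`. Hence the search on the
surviving examples follows the search on `S` until it stops, possibly earlier. The learner stores,
along its `O(log |X|)` nodes, the loss of `S` (an `O(log n)`-bit number) and the direction taken;
the unlearner replays the search, reading the survivors' loss at a node as the stored loss minus
the loss of the removed examples.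
-/

namespace ThresholdLU

section DyadicSearch

variable {β : Type*} (accept right : ℕ → Bool)

def move (toRight : Bool) (k m : ℕ) : ℕ := if toRight then m + 2 ^ k else m - 2 ^ k

def dyadicSearch : ℕ → ℕ → ℕ
  | 0, m => m
  | k + 1, m => if accept m then m else dyadicSearch k (move (right m) k m)

def searchRecord (f : ℕ → β) : ℕ → ℕ → List (β × Bool)
  | 0, _ => []
  | k + 1, m => (f m, right m) :: searchRecord f k (move (right m) k m)

def replay [DecidableEq β] (g : ℕ → β) : List (β × Bool) → ℕ → ℕ
  | [], m => m
  | (v, toRight) :: rest, m => if v = g m then m else replay g rest (move toRight rest.length m)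

theorem length_searchRecord (f : ℕ → β) (k m : ℕ) : (searchRecord right f k m).length = k := by
  induction k generalizing m with
  | zero => rfl
  | succ k ih => simp [searchRecord, ih]

theorem exists_eq_of_mem_searchRecord (f : ℕ → β) {k m : ℕ} {e : β × Bool}
    (he : e ∈ searchRecord right f k m) : ∃ m', e = (f m', right m') := by
  induction k generalizing m with
  | zero => simp [searchRecord] at he
  | succ k ih =>
    rcases List.mem_cons.mp he with rfl | he
    · exact ⟨m, rfl⟩
    · exact ih he

theorem accept_dyadicSearch {a : ℕ} (ha : accept a = true)
    (hright : ∀ m, accept m = false → (right m = true ↔ m < a)) :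
    ∀ k m, a < m + 2 ^ k → m < a + 2 ^ k → accept (dyadicSearch accept right k m) = true := by
  intro k
  induction k with
  | zero =>
    intro m h₁ h₂
    obtain rfl : m = a := by simp at h₁ h₂; omega
    exact ha
  | succ k ih =>
    intro m h₁ h₂
    rw [pow_succ] at h₁ h₂
    cases hs : accept m
    · have hma : m ≠ a := by rintro rfl; simp [ha] at hs
      have hdir := hright m hs
      simp only [dyadicSearch, hs, Bool.false_eq_true, if_false]
      cases hr : right m
      · have : a < m := by simp only [hr, Bool.false_eq_true, false_iff] at hdir; omega
        exact ih _ (by simp [move]; omega) (by simp [move]; omega)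
      · have : m < a := by simpa [hr] using hdir
        exact ih _ (by simp [move]; omega) (by simp [move]; omega)
    · simp [dyadicSearch, hs]

theorem replay_searchRecord [DecidableEq β] (f g : ℕ → β) (accept' right' : ℕ → Bool)
    (haccept : ∀ m, accept' m = true ↔ f m = g m)
    (hright : ∀ m, accept' m = false → right' m = right m) :
    ∀ k m, replay g (searchRecord right f k m) m = dyadicSearch accept' right' k m := by
  intro k
  induction k with
  | zero => intro m; rfl
  | succ k ih =>
    intro m
    simp only [searchRecord, replay, dyadicSearch, length_searchRecord]
    cases hs : accept' m
    · have hne : f m ≠ g m := fun h => by simp [(haccept m).2 h] at hs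
      simp only [hne, if_false, hright m hs, ih, Bool.false_eq_true]
    · simp [(haccept m).1 hs]

end DyadicSearch

section EmpLoss

variable {X Z : Type}

theorem empLoss_eq_zero_iff {h : X → Bool} {S : List (X × Bool)} :
    empLoss h S = 0 ↔ ∀ z ∈ S, h z.1 = z.2 := by
  simp only [empLoss, List.sum_eq_zero_iff, List.mem_map, forall_exists_index, and_imp,
    forall_apply_eq_imp_iff₂, ite_eq_left_iff, one_ne_zero, imp_false, not_not]

theorem empLoss_le_length (h : X → Bool) (S : List (X × Bool)) : empLoss h S ≤ S.length := by
  have hle := List.sum_le_card_nsmul (S.map fun z => if h z.1 = z.2 then 0 else 1) 1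
    (by simp only [List.mem_map]; rintro _ ⟨z, -, rfl⟩; split <;> omega)
  simpa [empLoss] using hle

theorem surviving_append_removedList_perm (S : List Z) (I : Finset (Fin S.length)) :
    (surviving S I ++ removedList S I).Perm S := by
  have hsplit := List.filter_append_perm (fun i => decide (i ∈ I)) (List.finRange S.length)
  simpa [surviving, removedList, ← List.map_append, List.map_get_finRange] using
    (List.perm_append_comm.trans hsplit).map S.get

theorem empLoss_surviving_add_removedList (h : X → Bool) (S : List (X × Bool))
    (I : Finset (Fin S.length)) :
    empLoss h (surviving S I) + empLoss h (removedList S I) = empLoss h S := by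
  rw [empLoss, empLoss, empLoss, ← List.sum_append, ← List.map_append]
  exact ((surviving_append_removedList_perm S I).map _).sum_eq

end EmpLoss

section Encoding

theorem exists_decode_encode {α β : Type*} [Fintype α] [Nonempty α] {cs : ℕ}
    (hcard : Fintype.card α ≤ 2 ^ cs) (f : α → β) :
    ∃ (enc : β → Fin cs → Bool) (dec : (Fin cs → Bool) → β), ∀ x, dec (enc (f x)) = f x := by
  obtain ⟨e⟩ := Function.Embedding.nonempty_of_card_le (α := α) (β := Fin cs → Bool)
    (by simpa using hcard)
  refine ⟨e ∘ Function.invFun f, f ∘ Function.invFun e, fun x => ?_⟩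
  simp only [Function.comp_apply, Function.leftInverse_invFun e.injective _]
  exact Function.invFun_eq ⟨x, rfl⟩

def listOfTable {K n : ℕ} (t : Fin K → Fin (n + 1) × Bool) : List (ℕ × Bool) :=
  List.ofFn fun j => ((t j).1, (t j).2)

theorem exists_listOfTable_eq {K n : ℕ} {l : List (ℕ × Bool)} (hl : l.length = K)
    (hn : ∀ e ∈ l, e.1 ≤ n) : ∃ t : Fin K → Fin (n + 1) × Bool, listOfTable t = l := by
  subst hl
  exact ⟨fun j => (⟨l[j].1, Nat.lt_succ_of_le (hn _ (List.getElem_mem _))⟩, l[j].2),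
    by simp [listOfTable, List.ofFn_getElem]⟩

theorem card_table_le {K n L : ℕ} (hn : n + 1 ≤ 2 ^ L) (hL : 1 ≤ L) :
    Fintype.card (Fin K → Fin (n + 1) × Bool) ≤ 2 ^ (2 * (K * L)) := by
  have h2 : 2 ≤ 2 ^ L := by simpa using Nat.pow_le_pow_right two_pos hL
  calc Fintype.card (Fin K → Fin (n + 1) × Bool) = ((n + 1) * 2) ^ K := by simp
    _ ≤ (2 ^ L * 2 ^ L) ^ K := Nat.pow_le_pow_left (Nat.mul_le_mul hn h2) K
    _ = 2 ^ (2 * (K * L)) := by rw [← pow_add, ← pow_mul]; ring_nf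

end Encoding

section Thresholds

variable {N : ℕ}

-- The search may end beyond `N`, where `thrFn N m` is the all-`false` threshold `thrFn N N`.
theorem thrFn_mem_Hthr (m : ℕ) : thrFn N m ∈ Hthr N :=
  ⟨min m N, min_le_right m N, funext fun x => by simp [thrFn, not_le.mpr x.isLt]⟩

def goesRight (S : List (Fin N × Bool)) (m : ℕ) : Bool :=
  S.any fun z => !z.2 && decide (m ≤ (z.1 : ℕ))

theorem goesRight_iff {S : List (Fin N × Bool)} {a m : ℕ} (ha : empLoss (thrFn N a) S = 0)
    (hm : empLoss (thrFn N m) S ≠ 0) : goesRight S m = true ↔ m < a := by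
  rw [empLoss_eq_zero_iff] at ha
  obtain ⟨z, hz, hzm⟩ : ∃ z ∈ S, thrFn N m z.1 ≠ z.2 := by
    by_contra! h
    exact hm (empLoss_eq_zero_iff.mpr h)
  simp only [goesRight, List.any_eq_true, Bool.and_eq_true, Bool.not_eq_true', decide_eq_true_eq]
  constructor
  · rintro ⟨y, hy, hy₂, hmy⟩
    have := ha y hy
    simp only [thrFn, hy₂, decide_eq_false_iff_not, not_le] at this
    omega
  · intro hma
    have := ha z hz
    cases hz₂ : z.2 <;> simp only [thrFn, hz₂, decide_eq_false_iff_not, decide_eq_true_eq, ne_eq,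
      not_le, not_lt] at this hzm
    · exact ⟨z, hz, hz₂, hzm⟩
    · omega

def learnThreshold (S : List (Fin N × Bool)) : ℕ :=
  dyadicSearch (fun m => empLoss (thrFn N m) S = 0) (goesRight S) (Nat.clog 2 N + 1) 0

def learnRecord (S : List (Fin N × Bool)) : List (ℕ × Bool) :=
  searchRecord (goesRight S) (fun m => empLoss (thrFn N m) S) (Nat.clog 2 N + 1) 0

theorem empLoss_learnThreshold {S : List (Fin N × Bool)} {a : ℕ} (haN : a ≤ N)
    (ha : empLoss (thrFn N a) S = 0) : empLoss (thrFn N (learnThreshold S)) S = 0 := by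
  have hlt : a < 2 ^ (Nat.clog 2 N + 1) :=
    haN.trans_lt ((Nat.le_pow_clog one_lt_two N).trans_lt (Nat.pow_lt_pow_succ one_lt_two))
  simpa [learnThreshold] using
    accept_dyadicSearch (fun m => decide (empLoss (thrFn N m) S = 0)) (goesRight S)
    (by simpa using ha)
    (fun m hm => goesRight_iff ha (by simpa using hm)) _ 0 (by simpa using hlt) (by positivity)

theorem thrFn_learnThreshold_mem_ERM {S : List (Fin N × Bool)} (h : IsRealizable (Hthr N) S) :
    thrFn N (learnThreshold S) ∈ ERM (Hthr N) S := by
  obtain ⟨_, ⟨a, haN, rfl⟩, ha⟩ := h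
  refine ⟨thrFn_mem_Hthr _, fun g _ => ?_⟩
  rw [empLoss_learnThreshold haN ha]
  exact Nat.zero_le _

theorem fst_le_length_of_mem_learnRecord {S : List (Fin N × Bool)} {e : ℕ × Bool}
    (he : e ∈ learnRecord S) : e.1 ≤ S.length := by
  obtain ⟨m, rfl⟩ := exists_eq_of_mem_searchRecord _ _ he
  exact empLoss_le_length _ _

theorem replay_learnRecord {S : List (Fin N × Bool)} {a : ℕ} (ha : empLoss (thrFn N a) S = 0)
    (I : Finset (Fin S.length)) :
    replay (fun m => empLoss (thrFn N m) (removedList S I)) (learnRecord S) 0 =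
      learnThreshold (surviving S I) := by
  have hsplit := fun m => empLoss_surviving_add_removedList (thrFn N m) S I
  apply replay_searchRecord
  · intro m
    have := hsplit m
    simp only [decide_eq_true_eq]
    omega
  · intro m hm
    have hmT : empLoss (thrFn N m) (surviving S I) ≠ 0 := by simpa using hm
    have haT : empLoss (thrFn N a) (surviving S I) = 0 := by have := hsplit a; omega
    have hmS : empLoss (thrFn N m) S ≠ 0 := by have := hsplit m; omega
    exact Bool.eq_iff_iff.mpr ((goesRight_iff haT hmT).trans (goesRight_iff ha hmS).symm)

end Thresholds

end ThresholdLU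

open ThresholdLU in
/-- **Theorem (central LU scheme for 1D thresholds).** There is a constant `c` such that for
every domain size `N` and dataset size `n` there is a central (non-ticketed)
learning–unlearning scheme for the class of 1D thresholds over `{1, …, N}`, valid for all
realizable datasets of size (at most) `n`, whose auxiliary information has at most
`c · (log N) · (log n) = O((log|X|)(log n))` bits: `Learn S` returns an empirical risk
minimizer together with the auxiliary string, and for every unlearning request `I`,
`Unlearn (S_I, aux)` returns exactly the hypothesis that `Learn` returns on `S ∖ S_I`. -/
theorem thresholds_central_lu :
    ∃ c : ℕ, 0 < c ∧
      ∀ N n : ℕ, ∃ cs : ℕ,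
        cs ≤ c * ((Nat.clog 2 N + 1) * (Nat.clog 2 n + 1)) ∧
        ∃ (Learn : List (Fin N × Bool) → (Fin N → Bool) × (Fin cs → Bool))
          (Unlearn : List (Fin N × Bool) → (Fin cs → Bool) → (Fin N → Bool)),
          ∀ S : List (Fin N × Bool), S.length ≤ n → IsRealizable (Hthr N) S →
            (Learn S).1 ∈ ERM (Hthr N) S ∧
            ∀ I : Finset (Fin S.length),
              Unlearn (removedList S I) (Learn S).2 = (Learn (surviving S I)).1 := by
  refine ⟨2, two_pos, fun N n => ?_⟩
  have hn : n + 1 ≤ 2 ^ (Nat.clog 2 n + 1) := by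
    rw [pow_succ]
    have := Nat.le_pow_clog one_lt_two n
    have := Nat.one_le_two_pow (n := Nat.clog 2 n)
    omega
  obtain ⟨enc, dec, hdec⟩ := exists_decode_encode
    (card_table_le (K := Nat.clog 2 N + 1) hn le_add_self) listOfTable
  refine ⟨_, le_rfl, fun S => (thrFn N (learnThreshold S), enc (learnRecord S)),
    fun R aux => thrFn N (replay (fun m => empLoss (thrFn N m) R) (dec aux) 0),
    fun S hlen hreal => ⟨thrFn_learnThreshold_mem_ERM hreal, fun I => ?_⟩⟩
  obtain ⟨t, ht⟩ := exists_listOfTable_eq (l := learnRecord S) (length_searchRecord _ _ _ _)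
    fun e he => (fst_le_length_of_mem_learnRecord he).trans hlen
  obtain ⟨_, ⟨a, -, rfl⟩, ha⟩ := hreal
  dsimp only
  rw [← ht, hdec, ht, replay_learnRecord ha]
end

section
/- Any (central, non-ticketed) learning–unlearning scheme for the class H_pt of point functions, even one required to be valid only for H_pt-realizable datasets, must have space complexity Ω(|X|) once the dataset size is allowed to be Ω(|X|): there exists a constant c > 0 such that for every finite X = {1, …, m+1}, any LU scheme for H_pt over X that is valid for all H_pt-realizable datasets of size at most 2m must have auxiliary information of at least c · m bits. -/
/-- The point function `h_a(x) = 1{x = a}` on the domain `Fin N` (representing `{1, …, N}`). -/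
def pointFn {N : ℕ} (a : Fin N) : Fin N → Bool := fun x => decide (x = a)

/-- The class of point functions over `Fin N`. -/
def Hpt (N : ℕ) : Set (Fin N → Bool) := Set.range pointFn

/-!
Feed the scheme negative examples only. If every point except `i` occurs, the learner must
output `h_i`; if only `i` and `x` are missing, it must output `h_i` or `h_x`, and `x` beats `i`
on the remaining background `U` when it outputs `h_x`. Let `S_T` list every point `≠ i` once and
the points of `T ⊆ X ∖ {i}` once more. Unlearning one copy of `x` from `S_T` leaves a dataset
with answer `h_i` when `x ∈ T`, whereas from `S_{T₀}` it leaves the duel of `i` and `x` on `T₀`.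
So if some `x ∈ T` beats `i` on `T₀`, the auxiliary strings of `S_T` and `S_{T₀}` differ, and a
fibre of the aux map containing `T₀` consists of sets avoiding the beaters of `T₀`.
Every duel has exactly one winner, so averaging over `i` yields an `i` whose backgrounds have
`m/4` beaters on average. By Markov at least `2^(m-3)` backgrounds have `m/8` beaters, each aux
fibre contains at most `2^(m - m/8)` of them, and hence `2^C ≥ 2^(m/8 - 3)`.
-/

open Finset

section Lists

variable {Z : Type}

lemma removedList_singleton (S : List Z) (k : Fin S.length) : removedList S {k} = [S.get k] := by
  simp [removedList, List.filter_eq, List.count_finRange]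

lemma surviving_singleton (S : List Z) (k : Fin S.length) : surviving S {k} = S.eraseIdx k := by
  have h : S.eraseIdx k = ((List.finRange S.length).map S.get).eraseIdx k := by
    rw [List.map_get_finRange]
  rw [h, List.eraseIdx_map, ← List.idxOf_finRange k, List.eraseIdx_idxOf_eq_erase,
    (List.nodup_finRange _).erase_eq_filter]
  simp only [surviving, Finset.mem_singleton, decide_not]
  rfl

lemma exists_removal_eq_singleton [BEq Z] [LawfulBEq Z] {S : List Z} {z : Z} (hz : z ∈ S) :
    ∃ I : Finset (Fin S.length), removedList S I = [z] ∧ surviving S I = S.erase z := by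
  let k : Fin S.length := ⟨S.idxOf z, List.idxOf_lt_length_iff.2 hz⟩
  refine ⟨{k}, ?_, ?_⟩
  · rw [removedList_singleton, List.get_eq_getElem, List.getElem_idxOf]
  · rw [surviving_singleton, List.eraseIdx_idxOf_eq_erase]

end Lists

namespace Finset

lemma sort_erase {α : Type*} [LinearOrder α] (s : Finset α) (x : α) :
    s.sort.erase x = (s.erase x).sort := by
  refine List.Perm.eq_of_pairwise' (r := (· ≤ ·))
    ((s.pairwise_sort _).sublist (List.erase_sublist ..)) ((s.erase x).pairwise_sort _) ?_
  rw [← Multiset.coe_eq_coe, ← Multiset.coe_erase, sort_eq, sort_eq, erase_val]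

lemma eq_or_eq_of_notMem_erase_erase {α : Type*} [Fintype α] [DecidableEq α] {i x a : α}
    (ha : a ∉ (univ.erase i).erase x) : a = i ∨ a = x := by
  simp only [mem_erase, mem_univ, and_true, not_and_or, not_not] at ha
  tauto

lemma sum_card_filter_sdiff_powerset {α : Type*} [DecidableEq α] (G : Finset α)
    (P : α → Finset α → Prop) [∀ x U, Decidable (P x U)] :
    ∑ U ∈ G.powerset, #{x ∈ G \ U | P x U} = ∑ x ∈ G, #{U ∈ (G.erase x).powerset | P x U} := by
  simp only [card_filter]
  refine sum_comm' fun U x => ?_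
  simp only [mem_powerset, mem_sdiff, subset_erase]
  tauto

lemma two_mul_sum_sum_erase_of_add_swap {α : Type*} [Fintype α] [DecidableEq α]
    (g : α → α → ℕ) (c : ℕ) (hg : ∀ i x, i ≠ x → g i x + g x i = c) :
    2 * ∑ i, ∑ x ∈ univ.erase i, g i x = Fintype.card α * (Fintype.card α - 1) * c := by
  have hswap : ∑ i, ∑ x ∈ univ.erase i, g i x = ∑ i, ∑ x ∈ univ.erase i, g x i :=
    sum_comm' fun i x => by simp [ne_comm]
  calc 2 * ∑ i, ∑ x ∈ univ.erase i, g i x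
      = ∑ i, ∑ x ∈ univ.erase i, (g i x + g x i) := by
        rw [two_mul]; nth_rw 2 [hswap]; simp only [← sum_add_distrib]
    _ = ∑ i : α, ∑ _x ∈ univ.erase i, c :=
        sum_congr rfl fun i _ => sum_congr rfl fun x hx => hg i x (ne_of_mem_erase hx).symm
    _ = _ := by simp [card_univ, mul_assoc]

lemma sum_le_card_filter_mul_add {ι : Type*} (s : Finset ι) (g : ι → ℕ) {M : ℕ}
    (hg : ∀ i ∈ s, g i ≤ M) (d : ℕ) : ∑ i ∈ s, g i ≤ #{i ∈ s | d ≤ g i} * M + #s * d := by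
  rw [← sum_filter_add_sum_filter_not s (d ≤ g ·)]
  refine add_le_add ?_ ?_
  · simpa using sum_le_card_nsmul _ g M fun i hi => hg i (mem_filter.1 hi).1
  · refine (sum_le_card_nsmul _ g d fun i hi => (not_le.1 (mem_filter.1 hi).2).le).trans ?_
    simpa using Nat.mul_le_mul_right d (card_filter_le s _)

lemma card_filter_powerset_le_of_disjoint {α β : Type*} [DecidableEq α] [Fintype β]
    (G : Finset α) (D : Finset α → Finset α) (f : Finset α → β) (hD : ∀ T ⊆ G, D T ⊆ G)
    (hf : ∀ T ⊆ G, ∀ T₀ ⊆ G, f T = f T₀ → Disjoint T (D T₀)) (d : ℕ) :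
    #{T ∈ G.powerset | d ≤ #(D T)} ≤ 2 ^ (#G - d) * Fintype.card β := by
  classical
  refine (card_le_mul_card_image (f := f) _ _ fun b hb => ?_).trans
    (Nat.mul_le_mul_left _ (card_le_univ _))
  obtain ⟨T₀, hT₀, rfl⟩ := mem_image.1 hb
  simp only [mem_filter, mem_powerset] at hT₀
  have hfiber : {T ∈ {T ∈ G.powerset | d ≤ #(D T)} | f T = f T₀} ⊆ (G \ D T₀).powerset := by
    intro T hT
    simp only [mem_filter, mem_powerset] at hT
    exact mem_powerset.2 <| subset_sdiff.2 ⟨hT.1.1, hf T hT.1.1 T₀ hT₀.1 hT.2⟩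
  calc _ ≤ 2 ^ #(G \ D T₀) := (card_le_card hfiber).trans (card_powerset _).le
    _ ≤ 2 ^ (#G - d) := by
      rw [card_sdiff_of_subset (hD T₀ hT₀.1)]
      exact Nat.pow_le_pow_right two_pos (Nat.sub_le_sub_left hT₀.2 _)

end Finset

def negatives {X : Type} (l : List X) : List (X × Bool) := l.map (·, false)

section Negatives

variable {N : ℕ}

lemma pointFn_injective : Function.Injective (pointFn (N := N)) := fun a _ h => by
  simpa [pointFn] using congrFun h a

lemma empLoss_pointFn_negatives (a : Fin N) (l : List (Fin N)) :
    empLoss (pointFn a) (negatives l) = l.count a := by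
  induction l with
  | nil => rfl
  | cons b l ih =>
    simp only [empLoss, negatives, List.map_cons, List.sum_cons, List.count_cons] at ih ⊢
    rw [ih]
    by_cases h : b = a <;> simp [h, pointFn, add_comm]

lemma isRealizable_negatives {l : List (Fin N)} {b : Fin N} (hb : b ∉ l) :
    IsRealizable (Hpt N) (negatives l) :=
  ⟨pointFn b, ⟨b, rfl⟩, by rwa [empLoss_pointFn_negatives, List.count_eq_zero]⟩

lemma exists_eq_pointFn_of_mem_ERM_negatives {l : List (Fin N)} {b : Fin N} (hb : b ∉ l)
    {h : Fin N → Bool} (hh : h ∈ ERM (Hpt N) (negatives l)) : ∃ a ∉ l, h = pointFn a := by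
  obtain ⟨⟨a, rfl⟩, hmin⟩ := hh
  have := hmin (pointFn b) ⟨b, rfl⟩
  rw [empLoss_pointFn_negatives, empLoss_pointFn_negatives, List.count_eq_zero.2 hb,
    Nat.le_zero, List.count_eq_zero] at this
  exact ⟨a, this, rfl⟩

/-- Listing the sets in sorted order makes the sample depend on `G` and `T` only, and makes
erasing a point of `G` commute with taking the sample (`negSample_erase`). -/
def negSample (G T : Finset (Fin N)) : List (Fin N × Bool) := negatives (G.sort ++ T.sort)

lemma length_negSample (G T : Finset (Fin N)) : (negSample G T).length = #G + #T := by
  simp [negSample, negatives]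

lemma mem_negSample {G : Finset (Fin N)} (T : Finset (Fin N)) {x : Fin N} (hx : x ∈ G) :
    (x, false) ∈ negSample G T := by
  simp [negSample, negatives, hx]

lemma negSample_erase {G : Finset (Fin N)} (T : Finset (Fin N)) {x : Fin N} (hx : x ∈ G) :
    (negSample G T).erase (x, false) = negSample (G.erase x) T := by
  rw [negSample, negatives, ← List.map_erase (fun a b h => (Prod.ext_iff.1 h).1),
    List.erase_append_left _ ((mem_sort _).2 hx), sort_erase]
  rfl

end Negatives

def IsLUScheme {X : Type} {A : Type*} (H : Set (X → Bool)) (n : ℕ)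
    (Learn : List (X × Bool) → (X → Bool) × A) (Unlearn : List (X × Bool) → A → (X → Bool)) :
    Prop :=
  ∀ S : List (X × Bool), S.length ≤ n → IsRealizable H S →
    (Learn S).1 ∈ ERM H S ∧
    ∀ I : Finset (Fin S.length), Unlearn (removedList S I) (Learn S).2 = (Learn (surviving S I)).1

section PointFunctions

variable {m : ℕ} {A : Type*} {Learn : List (Fin (m + 1) × Bool) → (Fin (m + 1) → Bool) × A}
  {Unlearn : List (Fin (m + 1) × Bool) → A → (Fin (m + 1) → Bool)}

lemma card_univ_erase (i : Fin (m + 1)) : #(univ.erase i) = m := by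
  simp [card_erase_of_mem]

lemma notMem_sort_append_of_subset_erase {i : Fin (m + 1)} {G T : Finset (Fin (m + 1))}
    (hG : G ⊆ univ.erase i) (hT : T ⊆ univ.erase i) : i ∉ G.sort ++ T.sort := by
  simp only [List.mem_append, mem_sort, not_or]
  exact ⟨fun h => notMem_erase i univ (hG h), fun h => notMem_erase i univ (hT h)⟩

lemma IsLUScheme.spec_negSample (hLU : IsLUScheme (Hpt (m + 1)) (2 * m) Learn Unlearn)
    {i : Fin (m + 1)} {G T : Finset (Fin (m + 1))} (hG : G ⊆ univ.erase i) (hT : T ⊆ univ.erase i) :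
    (Learn (negSample G T)).1 ∈ ERM (Hpt (m + 1)) (negSample G T) ∧
    ∀ I, Unlearn (removedList _ I) (Learn (negSample G T)).2 =
      (Learn (surviving (negSample G T) I)).1 := by
  refine hLU _ ?_ (isRealizable_negatives (notMem_sort_append_of_subset_erase hG hT))
  have := card_le_card hG
  have := card_le_card hT
  rw [length_negSample, card_univ_erase] at *
  omega

lemma IsLUScheme.exists_learn_negSample_eq (hLU : IsLUScheme (Hpt (m + 1)) (2 * m) Learn Unlearn)
    {i : Fin (m + 1)} {G T : Finset (Fin (m + 1))} (hG : G ⊆ univ.erase i) (hT : T ⊆ univ.erase i) :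
    ∃ a, a ∉ G ∧ a ∉ T ∧ (Learn (negSample G T)).1 = pointFn a := by
  obtain ⟨a, ha, hLa⟩ := exists_eq_pointFn_of_mem_ERM_negatives
    (notMem_sort_append_of_subset_erase hG hT) (hLU.spec_negSample hG hT).1
  simp only [List.mem_append, mem_sort, not_or] at ha
  exact ⟨a, ha.1, ha.2, hLa⟩

def Beats (Learn : List (Fin (m + 1) × Bool) → (Fin (m + 1) → Bool) × A) (i x : Fin (m + 1))
    (U : Finset (Fin (m + 1))) : Prop :=
  (Learn (negSample ((univ.erase i).erase x) U)).1 = pointFn x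

lemma IsLUScheme.beats_iff_not_beats (hLU : IsLUScheme (Hpt (m + 1)) (2 * m) Learn Unlearn)
    {i x : Fin (m + 1)} (hix : i ≠ x) {U : Finset (Fin (m + 1))}
    (hU : U ⊆ (univ.erase i).erase x) : Beats Learn x i U ↔ ¬ Beats Learn i x U := by
  rw [Beats, Beats, erase_right_comm]
  obtain ⟨a, ha, -, hLa⟩ := hLU.exists_learn_negSample_eq (erase_subset x _)
    (hU.trans (erase_subset x _))
  rcases eq_or_eq_of_notMem_erase_erase ha with rfl | rfl <;>
    simp [hLa, pointFn_injective.eq_iff, hix, hix.symm]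

lemma IsLUScheme.aux_ne_of_beats (hLU : IsLUScheme (Hpt (m + 1)) (2 * m) Learn Unlearn)
    {i x : Fin (m + 1)} {T T₀ : Finset (Fin (m + 1))} (hT : T ⊆ univ.erase i)
    (hT₀ : T₀ ⊆ univ.erase i) (hxT : x ∈ T) (hbeat : Beats Learn i x T₀) :
    (Learn (negSample (univ.erase i) T)).2 ≠ (Learn (negSample (univ.erase i) T₀)).2 := by
  intro heq
  have hx : x ∈ univ.erase i := hT hxT
  have hunlearn : ∀ U ⊆ univ.erase i,
      Unlearn [(x, false)] (Learn (negSample (univ.erase i) U)).2 =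
        (Learn (negSample ((univ.erase i).erase x) U)).1 := by
    intro U hU
    obtain ⟨I, hrem, hsurv⟩ := exists_removal_eq_singleton (mem_negSample U hx)
    rw [← hrem, (hLU.spec_negSample subset_rfl hU).2 I, hsurv, negSample_erase U hx]
  obtain ⟨a, ha, haT, hLa⟩ := hLU.exists_learn_negSample_eq (erase_subset x _) hT
  obtain rfl : a = i :=
    (eq_or_eq_of_notMem_erase_erase ha).resolve_right (by rintro rfl; exact haT hxT)
  have hix := (hunlearn T hT).symm.trans (heq ▸ hunlearn T₀ hT₀)
  rw [hLa, hbeat, pointFn_injective.eq_iff] at hix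
  exact ne_of_mem_erase hx hix.symm

lemma IsLUScheme.nontrivial (hLU : IsLUScheme (Hpt (m + 1)) (2 * m) Learn Unlearn) (hm : 1 ≤ m) :
    Nontrivial A := by
  have : Nontrivial (Fin (m + 1)) := Fin.nontrivial_iff_two_le.2 (by omega)
  obtain ⟨i, x, hix⟩ := exists_pair_ne (Fin (m + 1))
  wlog hbeat : Beats Learn i x ∅ generalizing i x
  · exact this x i hix.symm ((hLU.beats_iff_not_beats hix (empty_subset _)).2 hbeat)
  have hx : x ∈ univ.erase i := mem_erase.2 ⟨hix.symm, mem_univ x⟩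
  exact ⟨_, _, hLU.aux_ne_of_beats (singleton_subset_iff.2 hx) (empty_subset _)
    (mem_singleton_self x) hbeat⟩

open scoped Classical in
noncomputable def beaters (Learn : List (Fin (m + 1) × Bool) → (Fin (m + 1) → Bool) × A)
    (i : Fin (m + 1)) (U : Finset (Fin (m + 1))) : Finset (Fin (m + 1)) :=
  {x ∈ univ.erase i \ U | Beats Learn i x U}

open scoped Classical in
noncomputable def wins (Learn : List (Fin (m + 1) × Bool) → (Fin (m + 1) → Bool) × A)
    (i x : Fin (m + 1)) : ℕ :=
  #{U ∈ ((univ.erase i).erase x).powerset | Beats Learn i x U}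

lemma IsLUScheme.wins_add_wins (hLU : IsLUScheme (Hpt (m + 1)) (2 * m) Learn Unlearn)
    {i x : Fin (m + 1)} (hix : i ≠ x) : wins Learn i x + wins Learn x i = 2 ^ (m - 1) := by
  classical
  have hswap : {U ∈ ((univ.erase x).erase i).powerset | Beats Learn x i U} =
      {U ∈ ((univ.erase i).erase x).powerset | ¬ Beats Learn i x U} := by
    rw [erase_right_comm]
    exact filter_congr fun U hU => hLU.beats_iff_not_beats hix (mem_powerset.1 hU)
  rw [wins, wins, hswap, card_filter_add_card_filter_not, card_powerset,
    card_erase_of_mem (mem_erase.2 ⟨hix.symm, mem_univ x⟩), card_univ_erase]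

lemma IsLUScheme.exists_le_sum_card_beaters
    (hLU : IsLUScheme (Hpt (m + 1)) (2 * m) Learn Unlearn) :
    ∃ i, m * 2 ^ (m - 1) ≤ 2 * ∑ U ∈ (univ.erase i).powerset, #(beaters Learn i U) := by
  classical
  have htotal : ∑ i, 2 * ∑ U ∈ (univ.erase i).powerset, #(beaters Learn i U) =
      ∑ _i : Fin (m + 1), m * 2 ^ (m - 1) := by
    have hcount : ∀ i, ∑ U ∈ (univ.erase i).powerset, #(beaters Learn i U) =
        ∑ x ∈ univ.erase i, wins Learn i x := fun i => sum_card_filter_sdiff_powerset _ _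
    rw [← mul_sum, funext hcount,
      two_mul_sum_sum_erase_of_add_swap (wins Learn) _ fun i x => hLU.wins_add_wins]
    simp [mul_assoc]
  obtain ⟨i, -, hi⟩ := exists_le_of_sum_le univ_nonempty htotal.ge
  exact ⟨i, hi⟩

theorem IsLUScheme.two_pow_div_eight_le_card [Fintype A]
    (hLU : IsLUScheme (Hpt (m + 1)) (2 * m) Learn Unlearn) (hm : 1 ≤ m) :
    2 ^ (m / 8) ≤ 8 * Fintype.card A := by
  classical
  obtain ⟨i, hi⟩ := hLU.exists_le_sum_card_beaters
  set G := univ.erase i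
  set heavy := {U ∈ G.powerset | m / 8 ≤ #(beaters Learn i U)}
  have hG : #G = m := card_univ_erase i
  have hsub : ∀ U, beaters Learn i U ⊆ G := fun U => (filter_subset _ _).trans sdiff_subset
  have hmarkov : ∑ U ∈ G.powerset, #(beaters Learn i U) ≤ #heavy * m + 2 ^ m * (m / 8) := by
    simpa [card_powerset, hG] using sum_le_card_filter_mul_add G.powerset
      (fun U => #(beaters Learn i U)) (fun U _ => (card_le_card (hsub U)).trans hG.le) (m / 8)
  have hfiber : #heavy ≤ 2 ^ (m - m / 8) * Fintype.card A := by
    simpa [hG] using card_filter_powerset_le_of_disjoint G (beaters Learn i)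
      (fun U => (Learn (negSample G U)).2) (fun U _ => hsub U)
      (fun T hT T₀ hT₀ heq => disjoint_left.2 fun x hxT hxD =>
        hLU.aux_ne_of_beats hT hT₀ hxT (mem_filter.1 hxD).2 heq) (m / 8)
  have hheavy : 2 ^ m ≤ 8 * #heavy := by
    have h8 : 8 * (m / 8) ≤ m := Nat.mul_div_le m 8
    have h2 : 2 ^ m = 2 * 2 ^ (m - 1) := by rw [← pow_succ']; congr 1; omega
    rw [h2] at hmarkov
    have : m * 2 ^ (m - 1) ≤ m * (4 * #heavy) := by
      nlinarith [Nat.mul_le_mul_left (2 ^ (m - 1)) h8]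
    have := Nat.le_of_mul_le_mul_left this hm
    omega
  have hsplit : 2 ^ (m - m / 8) * 2 ^ (m / 8) = 2 ^ m := by
    rw [← pow_add, Nat.sub_add_cancel (Nat.div_le_self m 8)]
  refine Nat.le_of_mul_le_mul_left
    (?_ : 2 ^ (m - m / 8) * _ ≤ 2 ^ (m - m / 8) * _) (by positivity)
  nlinarith

end PointFunctions

/-- **Theorem (space lower bound for central LU schemes for point functions).** There is a
constant `c > 0` such that for every `m ≥ 1`, over the domain `{1, …, m+1}`, any central
(non-ticketed) learning–unlearning scheme for the class of point functions which is valid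
for all realizable datasets of size at most `2m` must use auxiliary information of at least
`c · m` bits. -/
theorem point_functions_central_lb :
    ∃ c : ℝ, 0 < c ∧
      ∀ m : ℕ, 1 ≤ m → ∀ cs : ℕ,
        (∃ (Learn : List (Fin (m + 1) × Bool) → (Fin (m + 1) → Bool) × (Fin cs → Bool))
           (Unlearn : List (Fin (m + 1) × Bool) → (Fin cs → Bool) → (Fin (m + 1) → Bool)),
           ∀ S : List (Fin (m + 1) × Bool), S.length ≤ 2 * m →
             IsRealizable (Hpt (m + 1)) S →
             (Learn S).1 ∈ ERM (Hpt (m + 1)) S ∧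
             ∀ I : Finset (Fin S.length),
               Unlearn (removedList S I) (Learn S).2 = (Learn (surviving S I)).1) →
        c * m ≤ (cs : ℝ) := by
  refine ⟨1 / 64, by norm_num, fun m hm cs ⟨Learn, Unlearn, hLU⟩ => ?_⟩
  change IsLUScheme (Hpt (m + 1)) (2 * m) Learn Unlearn at hLU
  have hcard : Fintype.card (Fin cs → Bool) = 2 ^ cs := by simp
  have hbits : m / 8 ≤ cs + 3 := by
    have := hLU.two_pow_div_eight_le_card hm
    rw [hcard] at this
    refine (Nat.pow_le_pow_iff_right (show 1 < 2 by norm_num)).1 ?_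
    rw [pow_add]
    linarith
  have hcs : cs ≠ 0 := by
    have := hLU.nontrivial hm
    exact Nat.one_lt_two_pow_iff.1 (hcard ▸ Fintype.one_lt_card)
  have : (m : ℝ) ≤ 64 * cs := by exact_mod_cast (by omega : m ≤ 64 * cs)
  linarith
end
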